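/- arXiv:1507.00853 — 8 statements merged into one kernel-verified Lean document; each statement's English description precedes it below -/
import Mathlib

section
/- Let f be a non-decreasing convex function on (0,∞) with lim_{x→∞} f(x)/x = +∞, extended continuously to [0,∞), and let f̂(t) = sup_{x>0}(x·t − f(x)). Then for every positive semidefinite n×n matrix B, Tr f(B) = sup over positive definite A ∈ ℙ_n of (Tr(AB) − Tr f̂(A)). -/
open Set Filter
open scoped ComplexOrder

/-- The convex conjugate (Legendre transform) restricted to `(0, ∞)`. -/
noncomputable def conjSup (f : ℝ → ℝ) (t : ℝ) : ℝ :=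
  sSup ((fun x => x * t - f x) '' Ioi (0 : ℝ))

section Scalar

variable {f : ℝ → ℝ}

lemma f_zero_le (hmono : MonotoneOn f (Ioi (0 : ℝ)))
    (hcont : ContinuousOn f (Ici (0 : ℝ))) {x : ℝ} (hx : 0 < x) : f 0 ≤ f x := by
  have h0 : ContinuousWithinAt f (Ici (0:ℝ)) 0 := hcont 0 (by simp)
  have h1 : Tendsto f (nhdsWithin 0 (Ioi (0:ℝ))) (nhds (f 0)) :=
    h0.tendsto.mono_left (nhdsWithin_mono 0 Ioi_subset_Ici_self)
  refine le_of_tendsto h1 ?_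
  filter_upwards [Ioo_mem_nhdsGT_of_mem (show (0:ℝ) ∈ Ico (0:ℝ) x from ⟨le_rfl, hx⟩)] with y hy
  exact hmono hy.1 hx hy.2.le

lemma exists_lin (hlim : Tendsto (fun x => f x / x) atTop atTop) (c : ℝ) :
    ∃ X : ℝ, 1 ≤ X ∧ ∀ x, X ≤ x → c * x ≤ f x := by
  obtain ⟨X0, hX0⟩ := eventually_atTop.mp (hlim.eventually_ge_atTop c)
  refine ⟨max X0 1, le_max_right _ _, fun x hx => ?_⟩
  have hx1 : (1:ℝ) ≤ x := le_trans (le_max_right X0 1) hx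
  have h := hX0 x (le_trans (le_max_left _ _) hx)
  rw [le_div_iff₀ (by linarith)] at h
  linarith

lemma bddAbove_conj (hmono : MonotoneOn f (Ioi (0 : ℝ)))
    (hlim : Tendsto (fun x => f x / x) atTop atTop)
    (hcont : ContinuousOn f (Ici (0 : ℝ))) {a : ℝ} (ha : 0 < a) :
    BddAbove ((fun x => x * a - f x) '' Ioi (0:ℝ)) := by
  obtain ⟨X, hX1, hX⟩ := exists_lin hlim (a + 1)
  refine ⟨max 0 (X * a - f 0), ?_⟩
  rintro y ⟨x, hx, rfl⟩
  simp only [mem_Ioi] at hx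
  dsimp only
  rcases le_total x X with h | h
  · have h1 : f 0 ≤ f x := f_zero_le hmono hcont hx
    have h2 : x * a ≤ X * a := mul_le_mul_of_nonneg_right h ha.le
    exact le_trans (by linarith) (le_max_right _ _)
  · have h3 := hX x h
    exact le_trans (by nlinarith) (le_max_left _ _)

lemma neg_f_zero_le_conjSup (hmono : MonotoneOn f (Ioi (0 : ℝ)))
    (hlim : Tendsto (fun x => f x / x) atTop atTop)
    (hcont : ContinuousOn f (Ici (0 : ℝ))) {a : ℝ} (ha : 0 < a) :
    -f 0 ≤ conjSup f a := by
  have hf : Tendsto f (nhdsWithin 0 (Ioi (0:ℝ))) (nhds (f 0)) :=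
    (hcont 0 (by simp)).tendsto.mono_left (nhdsWithin_mono 0 Ioi_subset_Ici_self)
  have hx : Tendsto (fun x : ℝ => x * a) (nhdsWithin 0 (Ioi (0:ℝ))) (nhds (0 * a)) :=
    (tendsto_id.mono_left nhdsWithin_le_nhds).mul_const a
  have h1 : Tendsto (fun x : ℝ => x * a - f x) (nhdsWithin 0 (Ioi (0:ℝ)))
      (nhds (0 * a - f 0)) := hx.sub hf
  rw [zero_mul, zero_sub] at h1
  refine le_of_tendsto h1 ?_
  filter_upwards [self_mem_nhdsWithin] with x hx'
  exact le_csSup (bddAbove_conj hmono hlim hcont ha) ⟨x, hx', rfl⟩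

lemma young_scalar (hmono : MonotoneOn f (Ioi (0 : ℝ)))
    (hlim : Tendsto (fun x => f x / x) atTop atTop)
    (hcont : ContinuousOn f (Ici (0 : ℝ))) {a b : ℝ} (ha : 0 < a) (hb : 0 ≤ b) :
    a * b ≤ f b + conjSup f a := by
  rcases hb.eq_or_lt with rfl | hb'
  · have := neg_f_zero_le_conjSup hmono hlim hcont ha
    simp only [mul_zero]
    linarith
  · have h := le_csSup (bddAbove_conj hmono hlim hcont ha) ⟨b, hb', rfl⟩
    have h2 : b * a - f b ≤ conjSup f a := h
    have hcomm : a * b = b * a := mul_comm a b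
    linarith

end Scalar

section Scalar2

variable {f : ℝ → ℝ}

lemma approx_flat (hlim : Tendsto (fun x => f x / x) atTop atTop)
    {b : ℝ} (hb : 0 ≤ b) (hfb : ∀ x, 0 < x → f b ≤ f x) {ε : ℝ} (hε : 0 < ε) :
    ∃ a, 0 < a ∧ ∀ x, 0 < x → x * a - f x ≤ a * b - f b + ε := by
  obtain ⟨X0, hX01, hX0⟩ := exists_lin hlim 1
  set X := max X0 (f b) with hXdef
  have hX1 : (1:ℝ) ≤ X := le_trans hX01 (le_max_left _ _)
  have hX0' : 0 < X := by linarith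
  have hXfb : f b ≤ X := le_max_right _ _
  set a := min (ε / X) 1 with hadef
  have ha : 0 < a := lt_min (by positivity) one_pos
  have ha1 : a ≤ 1 := min_le_right _ _
  have haX : X * a ≤ ε := by
    have : a ≤ ε / X := min_le_left _ _
    rw [le_div_iff₀ hX0'] at this
    linarith
  refine ⟨a, ha, fun x hx => ?_⟩
  have hab : 0 ≤ a * b := mul_nonneg ha.le hb
  rcases le_total x X with h | h
  · have h1 : f b ≤ f x := hfb x hx
    have h2 : x * a ≤ X * a := mul_le_mul_of_nonneg_right h ha.le
    linarith
  · have h3 : 1 * x ≤ f x := hX0 x (le_trans (le_max_left _ _) h)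
    nlinarith
end Scalar2

lemma key_approx {f : ℝ → ℝ} (hmono : MonotoneOn f (Ioi (0 : ℝ)))
    (hconv : ConvexOn ℝ (Ioi (0 : ℝ)) f)
    (hlim : Tendsto (fun x => f x / x) atTop atTop)
    (hcont : ContinuousOn f (Ici (0 : ℝ)))
    {b : ℝ} (hb : 0 ≤ b) {ε : ℝ} (hε : 0 < ε) :
    ∃ a, 0 < a ∧ f b - ε ≤ a * b - conjSup f a := by
  suffices h : ∃ a, 0 < a ∧ ∀ x, 0 < x → x * a - f x ≤ a * b - f b + ε by
    obtain ⟨a, ha, hall⟩ := h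
    refine ⟨a, ha, ?_⟩
    have h1 : conjSup f a ≤ a * b - f b + ε := by
      apply csSup_le (Set.Nonempty.image _ ⟨1, mem_Ioi.mpr one_pos⟩)
      rintro y ⟨x, hx, rfl⟩
      exact hall x hx
    linarith
  rcases hb.eq_or_lt with rfl | hb'
  · exact approx_flat hlim le_rfl (fun x hx => f_zero_le hmono hcont hx) hε
  · set t1 := f (b + 1) - f b with ht1def
    have ht1 : 0 ≤ t1 :=
      sub_nonneg.mpr (hmono (mem_Ioi.mpr hb') (mem_Ioi.mpr (by linarith)) (by linarith))
    set δ := min 1 (ε / (t1 + 1)) with hδdef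
    have hδ0 : 0 < δ := lt_min one_pos (by positivity)
    have hδ1 : δ ≤ 1 := min_le_left _ _
    have hδε : δ * (t1 + 1) ≤ ε := by
      have : δ ≤ ε / (t1 + 1) := min_le_right _ _
      rw [le_div_iff₀ (by positivity)] at this
      linarith
    set t := (f (b + δ) - f b) / δ with htdef
    have hmemb : b ∈ Ioi (0:ℝ) := mem_Ioi.mpr hb'
    have hmembδ : b + δ ∈ Ioi (0:ℝ) := mem_Ioi.mpr (by linarith)
    have hmemb1 : b + 1 ∈ Ioi (0:ℝ) := mem_Ioi.mpr (by linarith)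
    have ht0 : 0 ≤ t :=
      div_nonneg (sub_nonneg.mpr (hmono hmemb hmembδ (by linarith))) hδ0.le
    have htδ : t * δ = f (b + δ) - f b := div_mul_cancel₀ _ hδ0.ne'
    have hslope : t ≤ t1 := by
      rcases eq_or_lt_of_le hδ1 with hδeq | hδlt
      · rw [htdef, ht1def, hδeq]; simp
      · have hsl := hconv.secant_mono hmemb hmembδ hmemb1 (ne_of_gt (by linarith))
          (ne_of_gt (by linarith)) (by linarith)
        have e1 : b + δ - b = δ := by ring
        have e2 : b + 1 - b = 1 := by ring
        rw [e1, e2, div_one] at hsl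
        rw [htdef, ht1def]
        exact hsl
    have htε : t * δ ≤ ε := by nlinarith
    rcases eq_or_lt_of_le ht0 with hteq | htpos
    · -- flat case : f (b+δ) = f b, hence f b ≤ f x for all x > 0
      have hflat : f (b + δ) = f b := by
        have := htδ; rw [← hteq] at this; linarith [this]
      have hfb : ∀ x, 0 < x → f b ≤ f x := by
        intro x hx
        rcases le_or_gt b x with h | h
        · exact hmono hmemb (mem_Ioi.mpr hx) h
        · have hs := hconv.slope_mono_adjacent (mem_Ioi.mpr hx) hmembδ h (by linarith)
          rw [hflat] at hs
          have hbx : 0 < b - x := by linarith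
          have h2 : (f b - f x) / (b - x) ≤ 0 := by
            refine hs.trans ?_
            simp only [sub_self, zero_div, le_refl]
          have := (div_nonpos_iff.mp h2)
          rcases this with ⟨h3, _⟩ | ⟨h3, h4⟩
          · linarith
          · linarith
      exact approx_flat hlim hb hfb hε
    · refine ⟨t, htpos, fun x hx => ?_⟩
      suffices hsup : f b + t * (x - b) - t * δ ≤ f x by linarith
      rcases le_or_gt x b with h | h
      · rcases eq_or_lt_of_le h with rfl | hxb
        · nlinarith
        · have hs := hconv.slope_mono_adjacent (mem_Ioi.mpr hx) hmembδ hxb (by linarith)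
          have e1 : b + δ - b = δ := by ring
          rw [e1, ← htdef] at hs
          have hbx : 0 < b - x := by linarith
          rw [div_le_iff₀ hbx] at hs
          nlinarith
      · rcases le_or_gt x (b + δ) with h2 | h2
        · have h3 : f b ≤ f x := hmono hmemb (mem_Ioi.mpr hx) h.le
          nlinarith
        · have hs := hconv.slope_mono_adjacent hmemb (mem_Ioi.mpr hx) (by linarith) h2
          have e1 : b + δ - b = δ := by ring
          rw [e1, ← htdef, le_div_iff₀ (by linarith : (0:ℝ) < x - (b + δ))] at hs
          nlinarith

section MatrixPart

open Matrix

variable {n : Type*} [Fintype n] [DecidableEq n]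

lemma contOn_spec (g : ℝ → ℝ) (M : Matrix n n ℂ) : ContinuousOn g (spectrum ℝ M) :=
  (Matrix.finite_real_spectrum (A := M)).continuousOn g

lemma trace_cfc_re (M : Matrix n n ℂ) (hM : M.IsHermitian) (g : ℝ → ℝ) :
    ((cfc g M).trace).re = ∑ i, g (hM.eigenvalues i) := by
  rw [hM.cfc_eq]
  rw [Matrix.IsHermitian.cfc, Unitary.conjStarAlgAut_apply, Matrix.trace_mul_cycle,
    Matrix.mem_unitaryGroup_iff'.mp (Matrix.IsHermitian.eigenvectorUnitary hM).2,
    one_mul, Matrix.trace_diagonal]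
  rw [Complex.re_sum]
  simp

end MatrixPart

section MatrixPart2

open Matrix

variable {n : Type*} [Fintype n] [DecidableEq n]

lemma posDef_conj {V : Matrix n n ℂ} (hV : V ∈ Matrix.unitaryGroup n ℂ) {α : n → ℝ}
    (hα : ∀ i, 0 < α i) :
    (V * Matrix.diagonal (RCLike.ofReal ∘ α) * star V).PosDef := by
  have hD : (Matrix.diagonal (RCLike.ofReal ∘ α : n → ℂ)).PosDef := by
    rw [Matrix.posDef_diagonal_iff]
    intro i
    simp only [Function.comp_apply]
    rw [RCLike.ofReal_pos]
    exact hα i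
  rw [Matrix.posDef_iff_dotProduct_mulVec]
  constructor
  · rw [Matrix.star_eq_conjTranspose]
    exact Matrix.isHermitian_mul_mul_conjTranspose V hD.1
  · intro x hx
    have hVV : V * star V = 1 := Matrix.mem_unitaryGroup_iff.mp hV
    have hx' : star V *ᵥ x ≠ 0 := by
      intro hc
      apply hx
      have h2 := congrArg (fun v => V *ᵥ v) hc
      simpa [Matrix.mulVec_mulVec, hVV] using h2
    have hgoal : dotProduct (star x) ((V * Matrix.diagonal (RCLike.ofReal ∘ α) * star V) *ᵥ x)
        = dotProduct (star (star V *ᵥ x)) (Matrix.diagonal (RCLike.ofReal ∘ α) *ᵥ (star V *ᵥ x)) := by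
      rw [← Matrix.mulVec_mulVec, ← Matrix.mulVec_mulVec, Matrix.star_mulVec,
        Matrix.star_eq_conjTranspose, Matrix.conjTranspose_conjTranspose,
        Matrix.dotProduct_mulVec]
    rw [hgoal]
    exact (Matrix.posDef_iff_dotProduct_mulVec.mp hD).2 hx'

end MatrixPart2

section MatrixPart3

open Matrix

variable {n : Type*} [Fintype n] [DecidableEq n]

lemma trace_herm_mul_re (M N : Matrix n n ℂ) (hM : M.IsHermitian) (hN : N.IsHermitian) :
    ((M * N).trace).re = ∑ k, ∑ l,
      Complex.normSq ((star (hM.eigenvectorUnitary : Matrix n n ℂ) *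
          (hN.eigenvectorUnitary : Matrix n n ℂ)) k l)
        * (hM.eigenvalues k * hN.eigenvalues l) := by
  set U := (hM.eigenvectorUnitary : Matrix n n ℂ) with hUdef
  set V := (hN.eigenvectorUnitary : Matrix n n ℂ) with hVdef
  set W : Matrix n n ℂ := star U * V with hWdef
  set a := hM.eigenvalues with hadef
  set b := hN.eigenvalues with hbdef
  have hUU : U * star U = 1 := Matrix.mem_unitaryGroup_iff.mp hM.eigenvectorUnitary.2
  have hUU' : star U * U = 1 := Matrix.mem_unitaryGroup_iff'.mp hM.eigenvectorUnitary.2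
  have h1 : M * N = U * (Matrix.diagonal (RCLike.ofReal ∘ a) * W *
      Matrix.diagonal (RCLike.ofReal ∘ b) * star W) * star U := by
    conv_lhs => rw [hM.spectral_theorem, hN.spectral_theorem]
    rw [hWdef]
    simp only [Unitary.conjStarAlgAut_apply, Matrix.star_mul, star_star, mul_assoc, hUU, mul_one, ← hUdef, ← hVdef,
      ← hadef, ← hbdef]
  have h2 : (M * N).trace = (Matrix.diagonal (RCLike.ofReal ∘ a) * W *
      Matrix.diagonal (RCLike.ofReal ∘ b) * star W).trace := by
    rw [h1, Matrix.trace_mul_cycle, ← mul_assoc, hUU', one_mul]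
  rw [h2]
  have h3 : (Matrix.diagonal (RCLike.ofReal ∘ a) * W * Matrix.diagonal (RCLike.ofReal ∘ b)
      * star W).trace = ∑ k, ∑ l, ((Complex.normSq (W k l) * (a k * b l) : ℝ) : ℂ) := by
    rw [Matrix.trace]
    refine Finset.sum_congr rfl fun k _ => ?_
    rw [Matrix.diag_apply, Matrix.mul_apply]
    refine Finset.sum_congr rfl fun l _ => ?_
    rw [Matrix.mul_diagonal, Matrix.diagonal_mul, Matrix.star_eq_conjTranspose,
      Matrix.conjTranspose_apply]
    have hc : (starRingEnd ℂ) (W k l) * W k l = (Complex.normSq (W k l) : ℂ) := by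
      rw [mul_comm, Complex.mul_conj]
    have hofr : (RCLike.ofReal : ℝ → ℂ) = Complex.ofReal := rfl
    simp only [hofr]
    calc (Complex.ofReal (a k)) * W k l * Complex.ofReal (b l) * star (W k l)
        = ((a k : ℂ) * (b l : ℂ)) * ((starRingEnd ℂ) (W k l) * W k l) := by
          rw [RCLike.star_def]
          ring
      _ = (Complex.normSq (W k l) : ℂ) * ((a k : ℂ) * (b l : ℂ)) := by rw [hc]; ring
      _ = ((Complex.normSq (W k l) * (a k * b l) : ℝ) : ℂ) := by push_cast; ring
  rw [h3, Complex.re_sum]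
  refine Finset.sum_congr rfl fun k _ => ?_
  rw [Complex.re_sum]
  refine Finset.sum_congr rfl fun l _ => ?_
  rw [Complex.ofReal_re]

end MatrixPart3

section MatrixPart4

open Matrix

variable {n : Type*} [Fintype n] [DecidableEq n]

lemma row_normSq_sum (W : Matrix n n ℂ) (h : W * star W = 1) (k : n) :
    ∑ l, Complex.normSq (W k l) = 1 := by
  have h1 : (W * star W) k k = (1 : Matrix n n ℂ) k k := by rw [h]
  rw [Matrix.mul_apply, Matrix.one_apply_eq] at h1
  have h2 : ∀ l : n, W k l * (star W) l k = (Complex.normSq (W k l) : ℂ) := fun l => by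
    rw [Matrix.star_eq_conjTranspose, Matrix.conjTranspose_apply, RCLike.star_def,
      Complex.mul_conj]
  rw [Finset.sum_congr rfl (fun l _ => h2 l)] at h1
  exact_mod_cast h1

lemma col_normSq_sum (W : Matrix n n ℂ) (h : star W * W = 1) (l : n) :
    ∑ k, Complex.normSq (W k l) = 1 := by
  have h1 : (star W * W) l l = (1 : Matrix n n ℂ) l l := by rw [h]
  rw [Matrix.mul_apply, Matrix.one_apply_eq] at h1
  have h2 : ∀ k : n, (star W) l k * W k l = (Complex.normSq (W k l) : ℂ) := fun k => by
    rw [Matrix.star_eq_conjTranspose, Matrix.conjTranspose_apply, mul_comm, RCLike.star_def,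
      Complex.mul_conj]
  rw [Finset.sum_congr rfl (fun k _ => h2 k)] at h1
  exact_mod_cast h1

lemma young_trace {f : ℝ → ℝ} (hmono : MonotoneOn f (Ioi (0 : ℝ)))
    (hlim : Tendsto (fun x => f x / x) atTop atTop)
    (hcont : ContinuousOn f (Ici (0 : ℝ)))
    (A B : Matrix n n ℂ) (hA : A.PosDef) (hB : B.PosSemidef) :
    ((A * B).trace).re ≤ ((cfc f B).trace).re + ((cfc (conjSup f) A).trace).re := by
  rw [trace_cfc_re B hB.1 f, trace_cfc_re A hA.1 (conjSup f), trace_herm_mul_re A B hA.1 hB.1]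
  set U := (hA.1.eigenvectorUnitary : Matrix n n ℂ) with hUdef
  set V := (hB.1.eigenvectorUnitary : Matrix n n ℂ) with hVdef
  set W : Matrix n n ℂ := star U * V with hWdef
  set a := hA.1.eigenvalues with hadef
  set b := hB.1.eigenvalues with hbdef
  have hUU' : star U * U = 1 := Matrix.mem_unitaryGroup_iff'.mp hA.1.eigenvectorUnitary.2
  have hVV : V * star V = 1 := Matrix.mem_unitaryGroup_iff.mp hB.1.eigenvectorUnitary.2
  have hVV' : star V * V = 1 := Matrix.mem_unitaryGroup_iff'.mp hB.1.eigenvectorUnitary.2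
  have hrow : ∀ k, ∑ l, Complex.normSq (W k l) = 1 := by
    apply row_normSq_sum
    rw [hWdef, Matrix.star_mul, star_star]
    rw [show star U * V * (star V * U) = star U * (V * star V) * U from by
      simp only [mul_assoc]]
    rw [hVV, mul_one, hUU']
  have hcol : ∀ l, ∑ k, Complex.normSq (W k l) = 1 := by
    apply col_normSq_sum
    rw [hWdef]
    have hUU : U * star U = 1 := Matrix.mem_unitaryGroup_iff.mp hA.1.eigenvectorUnitary.2
    rw [Matrix.star_mul, star_star]
    rw [show star V * U * (star U * V) = star V * (U * star U) * V from by
      simp only [mul_assoc]]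
    rw [hUU, mul_one, hVV']
  have hapos : ∀ k, 0 < a k := fun k => hA.eigenvalues_pos k
  have hbpos : ∀ l, 0 ≤ b l := fun l => hB.eigenvalues_nonneg l
  have key : ∀ k l, Complex.normSq (W k l) * (a k * b l)
      ≤ Complex.normSq (W k l) * (f (b l) + conjSup f (a k)) := fun k l =>
    mul_le_mul_of_nonneg_left (young_scalar hmono hlim hcont (hapos k) (hbpos l))
      (Complex.normSq_nonneg _)
  calc ∑ k, ∑ l, Complex.normSq (W k l) * (a k * b l)
      ≤ ∑ k, ∑ l, Complex.normSq (W k l) * (f (b l) + conjSup f (a k)) :=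
        Finset.sum_le_sum fun k _ => Finset.sum_le_sum fun l _ => key k l
    _ = (∑ k, ∑ l, Complex.normSq (W k l) * f (b l))
        + ∑ k, ∑ l, Complex.normSq (W k l) * conjSup f (a k) := by
        simp only [mul_add, Finset.sum_add_distrib]
    _ = (∑ l, f (b l)) + ∑ k, conjSup f (a k) := by
        congr 1
        · rw [Finset.sum_comm]
          refine Finset.sum_congr rfl fun l _ => ?_
          rw [← Finset.sum_mul, hcol l, one_mul]
        · refine Finset.sum_congr rfl fun k _ => ?_
          rw [← Finset.sum_mul, hrow k, one_mul]

end MatrixPart4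

section MatrixPart5

open Matrix

variable {n : Type*} [Fintype n] [DecidableEq n]

lemma approx_attain {f : ℝ → ℝ} (hmono : MonotoneOn f (Ioi (0 : ℝ)))
    (hconv : ConvexOn ℝ (Ioi (0 : ℝ)) f)
    (hlim : Tendsto (fun x => f x / x) atTop atTop)
    (hcont : ContinuousOn f (Ici (0 : ℝ)))
    (B : Matrix n n ℂ) (hB : B.PosSemidef) {ε : ℝ} (hε : 0 < ε) :
    ∃ A : Matrix n n ℂ, A.PosDef ∧
      ((cfc f B).trace).re - ε ≤ ((A * B).trace).re - ((cfc (conjSup f) A).trace).re := by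
  have hBsa : IsSelfAdjoint B := hB.1
  set ε' : ℝ := ε / (Fintype.card n + 1) with hε'def
  have hε' : 0 < ε' := by positivity
  set g : ℝ → ℝ := fun t =>
    if ht : 0 ≤ t then Classical.choose (key_approx hmono hconv hlim hcont ht hε') else 1
    with hgdef
  have hg_pos : ∀ t, 0 < g t := by
    intro t
    rw [hgdef]
    dsimp only
    split
    · exact (Classical.choose_spec (key_approx hmono hconv hlim hcont ‹0 ≤ t› hε')).1
    · exact one_pos
  have hg_spec : ∀ t, 0 ≤ t → f t - ε' ≤ g t * t - conjSup f (g t) := by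
    intro t ht
    rw [hgdef]
    dsimp only
    rw [dif_pos ht]
    exact (Classical.choose_spec (key_approx hmono hconv hlim hcont ht hε')).2
  set A := cfc g B with hAdef
  have hA_eq : A = (hB.1.eigenvectorUnitary : Matrix n n ℂ) *
      Matrix.diagonal (RCLike.ofReal ∘ (g ∘ hB.1.eigenvalues)) *
      star (hB.1.eigenvectorUnitary : Matrix n n ℂ) := by
    rw [hAdef, hB.1.cfc_eq]
    rfl
  have hA_pd : A.PosDef := by
    rw [hA_eq]
    exact posDef_conj hB.1.eigenvectorUnitary.2 (fun i => hg_pos _)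
  have hAB : A * B = cfc (fun x => g x * x) B := by
    have h := cfc_mul (R := ℝ) g id B (contOn_spec g B) (contOn_spec id B)
    rw [cfc_id ℝ B hBsa] at h
    rw [hAdef, ← h]
    rfl
  have h_tr_AB : ((A * B).trace).re = ∑ i, g (hB.1.eigenvalues i) * hB.1.eigenvalues i := by
    rw [hAB, trace_cfc_re B hB.1]
  have h_comp : cfc (conjSup f) A = cfc ((conjSup f) ∘ g) B := by
    rw [hAdef]
    exact (cfc_comp (conjSup f) g B hBsa
      (((Matrix.finite_real_spectrum (A := B)).image g).continuousOn _)
      (contOn_spec g B)).symm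
  have h_tr_conj : ((cfc (conjSup f) A).trace).re
      = ∑ i, conjSup f (g (hB.1.eigenvalues i)) := by
    rw [h_comp, trace_cfc_re B hB.1]
    rfl
  refine ⟨A, hA_pd, ?_⟩
  rw [trace_cfc_re B hB.1 f, h_tr_AB, h_tr_conj]
  have hbnn : ∀ i, 0 ≤ hB.1.eigenvalues i := fun i => hB.eigenvalues_nonneg i
  have hsum := Finset.sum_le_sum (s := Finset.univ)
    (fun i _ => hg_spec (hB.1.eigenvalues i) (hbnn i))
  rw [Finset.sum_sub_distrib, Finset.sum_sub_distrib, Finset.sum_const, Finset.card_univ] at hsum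
  rw [nsmul_eq_mul] at hsum
  have hcard : (Fintype.card n : ℝ) * ε' ≤ ε := by
    have h1 : (0:ℝ) < (Fintype.card n : ℝ) + 1 := by positivity
    rw [hε'def, ← mul_div_assoc, div_le_iff₀ h1]
    nlinarith [hε.le]
  linarith

end MatrixPart5

theorem stmt3 {n : Type*} [Fintype n] [DecidableEq n] (f : ℝ → ℝ)
    (hmono : MonotoneOn f (Ioi (0 : ℝ)))
    (hconv : ConvexOn ℝ (Ioi (0 : ℝ)) f)
    (hlim : Tendsto (fun x => f x / x) atTop atTop)
    (hcont : ContinuousOn f (Ici (0 : ℝ)))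
    (B : Matrix n n ℂ) (hB : B.PosSemidef) :
    ((cfc f B).trace).re =
      sSup { y : ℝ | ∃ A : Matrix n n ℂ, A.PosDef ∧
        y = ((A * B).trace).re - ((cfc (conjSup f) A).trace).re } := by
  set L := ((cfc f B).trace).re with hLdef
  set S := { y : ℝ | ∃ A : Matrix n n ℂ, A.PosDef ∧
    y = ((A * B).trace).re - ((cfc (conjSup f) A).trace).re } with hSdef
  have hub : ∀ y ∈ S, y ≤ L := by
    rintro y ⟨A, hApd, rfl⟩
    have := young_trace hmono hlim hcont A B hApd hB
    rw [← hLdef] at this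
    linarith
  have hne : S.Nonempty := by
    obtain ⟨A, hApd, -⟩ := approx_attain hmono hconv hlim hcont B hB one_pos
    exact ⟨_, A, hApd, rfl⟩
  refine le_antisymm ?_ (csSup_le hne hub)
  refine le_of_forall_pos_le_add fun ε hε => ?_
  obtain ⟨A, hApd, hle⟩ := approx_attain hmono hconv hlim hcont B hB hε
  have hmem : ((A * B).trace).re - ((cfc (conjSup f) A).trace).re ∈ S := ⟨A, hApd, rfl⟩
  have h2 := le_csSup ⟨L, hub⟩ hmem
  rw [← hLdef] at hle
  linarith
end

section
/- Let 0 < r < 1 and let f be a non-constant non-decreasing function on (0,∞) such that x ↦ f(x^{1−r}) is convex on (0,∞). Then f is convex, non-decreasing, and lim_{x→∞} f(x)/x = +∞, and moreover the function x ↦ f̂(x^r) is concave on (0,∞), where f̂(t) = sup_{x>0}(x·t − f(x)). -/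
open Set Filter

/-- Concavity of the Cobb–Douglas function, two-point form. -/
private lemma cobb {r a b x1 x2 y1 y2 : ℝ} (hr : 0 < r) (hr1 : r < 1)
    (ha : 0 < a) (hb : 0 < b) (hab : a + b = 1)
    (hx1 : 0 < x1) (hx2 : 0 < x2) (hy1 : 0 < y1) (hy2 : 0 < y2) :
    a * (x1 ^ r * y1 ^ (1 - r)) + b * (x2 ^ r * y2 ^ (1 - r)) ≤
      (a * x1 + b * x2) ^ r * (a * y1 + b * y2) ^ (1 - r) := by
  set X := a * x1 + b * x2 with hXdef
  set Y := a * y1 + b * y2 with hYdef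
  have hX : 0 < X := by positivity
  have hY : 0 < Y := by positivity
  have h1 := Real.geom_mean_le_arith_mean2_weighted (w₁ := r) (w₂ := 1 - r)
      (p₁ := x1 / X) (p₂ := y1 / Y) hr.le (by linarith)
      (div_nonneg hx1.le hX.le) (div_nonneg hy1.le hY.le) (by ring)
  have h2 := Real.geom_mean_le_arith_mean2_weighted (w₁ := r) (w₂ := 1 - r)
      (p₁ := x2 / X) (p₂ := y2 / Y) hr.le (by linarith)
      (div_nonneg hx2.le hX.le) (div_nonneg hy2.le hY.le) (by ring)
  rw [Real.div_rpow hx1.le hX.le, Real.div_rpow hy1.le hY.le, div_mul_div_comm] at h1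
  rw [Real.div_rpow hx2.le hX.le, Real.div_rpow hy2.le hY.le, div_mul_div_comm] at h2
  have hD : 0 < X ^ r * Y ^ (1 - r) := by positivity
  rw [← div_le_one hD]
  have e1 : r * (X / X) + (1 - r) * (Y / Y) = 1 := by
    rw [div_self hX.ne', div_self hY.ne']; ring
  calc (a * (x1 ^ r * y1 ^ (1 - r)) + b * (x2 ^ r * y2 ^ (1 - r))) / (X ^ r * Y ^ (1 - r))
      = a * (x1 ^ r * y1 ^ (1 - r) / (X ^ r * Y ^ (1 - r)))
        + b * (x2 ^ r * y2 ^ (1 - r) / (X ^ r * Y ^ (1 - r))) := by ring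
    _ ≤ a * (r * (x1 / X) + (1 - r) * (y1 / Y))
        + b * (r * (x2 / X) + (1 - r) * (y2 / Y)) :=
        add_le_add (mul_le_mul_of_nonneg_left h1 ha.le)
          (mul_le_mul_of_nonneg_left h2 hb.le)
    _ = r * (X / X) + (1 - r) * (Y / Y) := by
        rw [hXdef, hYdef]; field_simp; ring
    _ = 1 := e1

theorem stmt5 (f : ℝ → ℝ) (r : ℝ) (hr : 0 < r) (hr1 : r < 1)
    (hmono : MonotoneOn f (Ioi (0 : ℝ)))
    (hnonconst : ¬ ∃ c : ℝ, ∀ x ∈ Ioi (0 : ℝ), f x = c)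
    (hconv' : ConvexOn ℝ (Ioi (0 : ℝ)) (fun x => f (x ^ (1 - r)))) :
    ConvexOn ℝ (Ioi (0 : ℝ)) f ∧
    Tendsto (fun x => f x / x) atTop atTop ∧
    ConcaveOn ℝ (Ioi (0 : ℝ)) (fun x => conjSup f (x ^ r)) := by
  have h1r : (0:ℝ) < 1 - r := by linarith
  set p : ℝ := (1 - r)⁻¹ with hpdef
  have hppos : 0 < p := inv_pos.mpr h1r
  have hp1 : 1 < p := (one_lt_inv₀ h1r).mpr (by linarith)
  have hid : ∀ x : ℝ, 0 < x → (x ^ p) ^ (1 - r) = x := by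
    intro x hx
    rw [← Real.rpow_mul hx.le, inv_mul_cancel₀ h1r.ne', Real.rpow_one]
  have hid2 : ∀ x : ℝ, 0 < x → (x ^ (1 - r)) ^ p = x := by
    intro x hx
    rw [← Real.rpow_mul hx.le, mul_inv_cancel₀ h1r.ne', Real.rpow_one]
  -- Part 1 : convexity of f
  have hconv : ConvexOn ℝ (Ioi (0:ℝ)) f := by
    refine ⟨convex_Ioi 0, ?_⟩
    intro x hx y hy a b ha hb hab
    simp only [smul_eq_mul]
    have hx0 : (0:ℝ) < x := hx
    have hy0 : (0:ℝ) < y := hy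
    have hz0 : (0:ℝ) < a * x + b * y := by
      have := (convex_Ioi (0:ℝ)) hx hy ha hb hab
      simpa [smul_eq_mul] using this
    have hxp : (0:ℝ) < x ^ p := Real.rpow_pos_of_pos hx0 p
    have hyp : (0:ℝ) < y ^ p := Real.rpow_pos_of_pos hy0 p
    have hcomb : (0:ℝ) < a * x ^ p + b * y ^ p := by
      have := (convex_Ioi (0:ℝ)) (mem_Ioi.mpr hxp) (mem_Ioi.mpr hyp) ha hb hab
      simpa [smul_eq_mul] using this
    have hrxp : (a * x + b * y) ^ p ≤ a * x ^ p + b * y ^ p := by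
      have := (convexOn_rpow hp1.le).2 (mem_Ici.mpr hx0.le) (mem_Ici.mpr hy0.le) ha hb hab
      simpa [smul_eq_mul] using this
    calc f (a * x + b * y) = f (((a * x + b * y) ^ p) ^ (1 - r)) := by rw [hid _ hz0]
      _ ≤ f ((a * x ^ p + b * y ^ p) ^ (1 - r)) :=
          hmono (Real.rpow_pos_of_pos (Real.rpow_pos_of_pos hz0 p) _)
            (Real.rpow_pos_of_pos hcomb _)
            (Real.rpow_le_rpow (Real.rpow_pos_of_pos hz0 p).le hrxp h1r.le)
      _ ≤ a * f ((x ^ p) ^ (1 - r)) + b * f ((y ^ p) ^ (1 - r)) := by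
          have := hconv'.2 (mem_Ioi.mpr hxp) (mem_Ioi.mpr hyp) ha hb hab
          simpa [smul_eq_mul] using this
      _ = a * f x + b * f y := by rw [hid _ hx0, hid _ hy0]
  -- two points where f strictly increases
  push_neg at hnonconst
  obtain ⟨w, hw, hwne⟩ := hnonconst (f 1)
  have hw0 : (0:ℝ) < w := hw
  obtain ⟨u1, u2, hu1, hu2, h12, hf12⟩ :
      ∃ u1 u2 : ℝ, 0 < u1 ∧ 0 < u2 ∧ u1 < u2 ∧ f u1 < f u2 := by
    rcases lt_trichotomy w 1 with h | h | h
    · exact ⟨w, 1, hw0, one_pos, h,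
        lt_of_le_of_ne (hmono hw (mem_Ioi.mpr one_pos) h.le) hwne⟩
    · exact absurd (by rw [h]) hwne
    · exact ⟨1, w, one_pos, hw0, h,
        lt_of_le_of_ne (hmono (mem_Ioi.mpr one_pos) hw h.le) (Ne.symm hwne)⟩
  set y1 : ℝ := u1 ^ p with hy1def
  set y2 : ℝ := u2 ^ p with hy2def
  have hy1pos : 0 < y1 := Real.rpow_pos_of_pos hu1 p
  have hy2pos : 0 < y2 := Real.rpow_pos_of_pos hu2 p
  have hy12 : y1 < y2 := Real.rpow_lt_rpow hu1.le h12 hppos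
  have hgy1 : f (y1 ^ (1 - r)) = f u1 := by rw [hy1def, hid _ hu1]
  have hgy2 : f (y2 ^ (1 - r)) = f u2 := by rw [hy2def, hid _ hu2]
  set s : ℝ := (f u2 - f u1) / (y2 - y1) with hsdef
  have hs : 0 < s := div_pos (by linarith) (by linarith)
  have hslope : ∀ z : ℝ, y2 < z → f u2 + s * (z - y2) ≤ f (z ^ (1 - r)) := by
    intro z hz
    have h := hconv'.slope_mono_adjacent (mem_Ioi.mpr hy1pos)
      (mem_Ioi.mpr (hy2pos.trans hz)) hy12 hz
    rw [hgy1, hgy2] at h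
    rw [← hsdef] at h
    have hz2 : 0 < z - y2 := by linarith
    have := (le_div_iff₀ hz2).mp h
    linarith
  set c : ℝ := f u2 - s * y2 with hcdef
  have hlow : ∀ x : ℝ, y2 ^ (1 - r) < x → 0 < x → c / x + s * x ^ (p - 1) ≤ f x / x := by
    intro x hgt hx0
    have hxp : y2 < x ^ p := by
      have := Real.rpow_lt_rpow (Real.rpow_pos_of_pos hy2pos (1 - r)).le hgt hppos
      rwa [hid2 _ hy2pos] at this
    have hfb := hslope (x ^ p) hxp
    rw [hid _ hx0] at hfb
    have he : c / x + s * x ^ (p - 1) = (f u2 + s * (x ^ p - y2)) / x := by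
      rw [Real.rpow_sub hx0, Real.rpow_one, hcdef]
      field_simp
      ring
    rw [he]
    gcongr
  -- Part 2 : superlinear growth
  have htend : Tendsto (fun x => f x / x) atTop atTop := by
    have h2 : Tendsto (fun x : ℝ => -|c| + s * x ^ (p - 1)) atTop atTop :=
      tendsto_atTop_add_const_left _ (-|c|)
        ((tendsto_rpow_atTop (by linarith : (0:ℝ) < p - 1)).const_mul_atTop hs)
    refine tendsto_atTop_mono' atTop ?_ h2
    filter_upwards [eventually_gt_atTop (y2 ^ (1 - r)), eventually_ge_atTop (1:ℝ)]
      with x hgt hx1'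
    have hx0 : (0:ℝ) < x := lt_of_lt_of_le one_pos hx1'
    have habs : |c / x| ≤ |c| := by
      rw [abs_div, abs_of_pos hx0]
      exact div_le_self (abs_nonneg c) hx1'
    have h3 : -|c| ≤ c / x := by
      have := neg_abs_le (c / x)
      linarith [neg_le_neg habs]
    calc -|c| + s * x ^ (p - 1) ≤ c / x + s * x ^ (p - 1) := by linarith
      _ ≤ f x / x := hlow x hgt hx0
  refine ⟨hconv, htend, ?_⟩
  -- Part 3 : concavity of the conjugate composed with x ^ r
  by_cases hbb : BddBelow (f '' Ioc (0:ℝ) 1)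
  · -- the conjugate is a genuine supremum
    obtain ⟨m, hm⟩ := hbb
    have hbdd : ∀ t : ℝ, 0 < t → BddAbove ((fun u => u * t - f u) '' Ioi (0:ℝ)) := by
      intro t ht
      obtain ⟨M, hM⟩ := eventually_atTop.mp (htend.eventually_ge_atTop t)
      set M' := max M 1 with hM'def
      refine ⟨max (M' * t - min m (f 1)) 0, ?_⟩
      rintro v ⟨u, hu, rfl⟩
      have hu0 : (0:ℝ) < u := hu
      rcases le_or_gt M' u with hMu | hMu
      · have h5 : t ≤ f u / u := hM u (le_trans (le_max_left _ _) hMu)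
        have h6 : t * u ≤ f u := (le_div_iff₀ hu0).mp h5
        have : u * t - f u ≤ 0 := by linarith [h6]
        exact this.trans (le_max_right _ _)
      · have hfl : min m (f 1) ≤ f u := by
          rcases le_or_gt u 1 with h7 | h7
          · exact (min_le_left _ _).trans (hm ⟨u, ⟨hu0, h7⟩, rfl⟩)
          · exact (min_le_right _ _).trans
              (hmono (mem_Ioi.mpr one_pos) (mem_Ioi.mpr hu0) h7.le)
        have hut : u * t ≤ M' * t := mul_le_mul_of_nonneg_right hMu.le ht.le
        have : u * t - f u ≤ M' * t - min m (f 1) := by linarith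
        exact this.trans (le_max_left _ _)
    refine ⟨convex_Ioi 0, ?_⟩
    intro x1 hx1 x2 hx2 a b ha hb hab
    simp only [smul_eq_mul]
    rcases eq_or_lt_of_le ha with rfl | ha'
    · have hb1 : b = 1 := by linarith
      subst hb1; simp
    rcases eq_or_lt_of_le hb with rfl | hb'
    · have ha1 : a = 1 := by linarith
      subst ha1; simp
    have hx10 : (0:ℝ) < x1 := hx1
    have hx20 : (0:ℝ) < x2 := hx2
    have hX : (0:ℝ) < a * x1 + b * x2 := by positivity
    have hXr : (0:ℝ) < (a * x1 + b * x2) ^ r := Real.rpow_pos_of_pos hX r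
    have ht1 : (0:ℝ) < x1 ^ r := Real.rpow_pos_of_pos hx10 r
    have ht2 : (0:ℝ) < x2 ^ r := Real.rpow_pos_of_pos hx20 r
    have hne : ∀ t : ℝ, ((fun u => u * t - f u) '' Ioi (0:ℝ)).Nonempty :=
      fun t => ⟨_, mem_image_of_mem _ (mem_Ioi.mpr one_pos)⟩
    apply le_of_forall_sub_le
    intro ε hε
    obtain ⟨v1, hv1mem, hv1⟩ := exists_lt_of_lt_csSup (hne (x1 ^ r))
      (show conjSup f (x1 ^ r) - ε < sSup _ from sub_lt_self _ hε)
    obtain ⟨w1, hw1, rfl⟩ := hv1mem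
    obtain ⟨v2, hv2mem, hv2⟩ := exists_lt_of_lt_csSup (hne (x2 ^ r))
      (show conjSup f (x2 ^ r) - ε < sSup _ from sub_lt_self _ hε)
    obtain ⟨w2, hw2, rfl⟩ := hv2mem
    have hw10 : (0:ℝ) < w1 := hw1
    have hw20 : (0:ℝ) < w2 := hw2
    set z1 : ℝ := w1 ^ p with hz1def
    set z2 : ℝ := w2 ^ p with hz2def
    have hz1 : (0:ℝ) < z1 := Real.rpow_pos_of_pos hw10 p
    have hz2 : (0:ℝ) < z2 := Real.rpow_pos_of_pos hw20 p
    set z : ℝ := a * z1 + b * z2 with hzdef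
    have hz : (0:ℝ) < z := by positivity
    set uu : ℝ := z ^ (1 - r) with huudef
    have huu : (0:ℝ) < uu := Real.rpow_pos_of_pos hz _
    -- convexity of g gives f uu ≤ a f w1 + b f w2
    have hfu : f uu ≤ a * f w1 + b * f w2 := by
      have := hconv'.2 (mem_Ioi.mpr hz1) (mem_Ioi.mpr hz2) ha hb hab
      simp only [smul_eq_mul] at this
      rw [hz1def, hz2def, hid _ hw10, hid _ hw20] at this
      exact this
    -- Cobb–Douglas gives the cross term inequality
    have hcd : a * (w1 * x1 ^ r) + b * (w2 * x2 ^ r) ≤ uu * (a * x1 + b * x2) ^ r := by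
      have h8 := cobb hr hr1 ha' hb' hab hx10 hx20 hz1 hz2
      rw [hz1def, hz2def, hid _ hw10, hid _ hw20] at h8
      calc a * (w1 * x1 ^ r) + b * (w2 * x2 ^ r)
          = a * (x1 ^ r * w1) + b * (x2 ^ r * w2) := by ring
        _ ≤ (a * x1 + b * x2) ^ r * (a * w1 ^ p + b * w2 ^ p) ^ (1 - r) := h8
        _ = uu * (a * x1 + b * x2) ^ r := by
            rw [huudef, hzdef, hz1def, hz2def]; ring
    have hle : uu * (a * x1 + b * x2) ^ r - f uu ≤ conjSup f ((a * x1 + b * x2) ^ r) :=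
      le_csSup (hbdd _ hXr) (mem_image_of_mem _ (mem_Ioi.mpr huu))
    have e1 : conjSup f (x1 ^ r) - ε < w1 * x1 ^ r - f w1 := hv1
    have e2 : conjSup f (x2 ^ r) - ε < w2 * x2 ^ r - f w2 := hv2
    have q1 : a * (conjSup f (x1 ^ r) - ε) ≤ a * (w1 * x1 ^ r - f w1) :=
      mul_le_mul_of_nonneg_left e1.le ha'.le
    have q2 : b * (conjSup f (x2 ^ r) - ε) ≤ b * (w2 * x2 ^ r - f w2) :=
      mul_le_mul_of_nonneg_left e2.le hb'.le
    have q3 : a * (conjSup f (x1 ^ r) - ε) + b * (conjSup f (x2 ^ r) - ε)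
        = a * conjSup f (x1 ^ r) + b * conjSup f (x2 ^ r) - ε := by
      linear_combination (-ε) * hab
    have q4 : a * (w1 * x1 ^ r - f w1) + b * (w2 * x2 ^ r - f w2)
        = (a * (w1 * x1 ^ r) + b * (w2 * x2 ^ r)) - (a * f w1 + b * f w2) := by ring
    linarith [q1, q2, q3, q4, hcd, hfu, hle]
  · -- f is unbounded below near 0 : the conjugate is identically 0
    have hzero : ∀ t : ℝ, 0 < t → conjSup f t = 0 := by
      intro t ht
      apply Real.sSup_of_not_bddAbove
      rintro ⟨B, hB⟩
      rw [not_bddBelow_iff] at hbb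
      obtain ⟨v, hv, hvB⟩ := hbb (-B)
      obtain ⟨u, hu, rfl⟩ := hv
      have h9 : u * t - f u ≤ B := hB (mem_image_of_mem _ (mem_Ioi.mpr hu.1))
      linarith [mul_pos hu.1 ht]
    exact (concaveOn_const 0 (convex_Ioi 0)).congr
      fun x hx => (hzero _ (Real.rpow_pos_of_pos hx r)).symm
end

section
/- Let r > 0 and let f be a non-decreasing function on (0,∞) such that x ↦ f(x^{1+r}) is concave on (0,∞). Then f is concave with lim_{x→∞} f(x)/x = 0, and the function x ↦ f̌(x^{−r}) is convex on (0,∞), where f̌(t) = inf_{x>0}(x·t − f(x)). -/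
open Set Filter

/-- The concave conjugate restricted to `(0, ∞)`. -/
noncomputable def conjInf (f : ℝ → ℝ) (t : ℝ) : ℝ :=
  sInf ((fun x => x * t - f x) '' Ioi (0 : ℝ))

lemma aux_rpow_le {θ ε y : ℝ} (hθ0 : 0 < θ) (hθ1 : θ < 1) (hε : 0 < ε) (hy : 0 ≤ y) :
    y ^ θ ≤ ε * y + ε ^ (-θ / (1 - θ)) := by
  have h1θ : 0 < 1 - θ := by linarith
  set Y : ℝ := ε ^ (-(1 / (1 - θ))) with hYdef
  have hYpos : 0 < Y := Real.rpow_pos_of_pos hε _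
  have hYθ : Y ^ θ = ε ^ (-θ / (1 - θ)) := by
    rw [hYdef, ← Real.rpow_mul hε.le]
    congr 1
    field_simp
  have hYθ1 : Y ^ (θ - 1) = ε := by
    rw [hYdef, ← Real.rpow_mul hε.le,
      show -(1 / (1 - θ)) * (θ - 1) = 1 by field_simp; ring, Real.rpow_one]
  rcases le_or_gt y Y with h | h
  · have h2 : y ^ θ ≤ Y ^ θ := Real.rpow_le_rpow hy h hθ0.le
    have hεy : 0 ≤ ε * y := by positivity
    rw [hYθ] at h2
    linarith
  · have hy0 : 0 < y := hYpos.trans h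
    have e : y ^ θ = y * y ^ (θ - 1) := by
      have h' : y ^ (1 + (θ - 1)) = y ^ (1:ℝ) * y ^ (θ - 1) := Real.rpow_add hy0 1 (θ - 1)
      rw [Real.rpow_one, show (1:ℝ) + (θ - 1) = θ by ring] at h'
      exact h'
    have h2 : y ^ (θ - 1) ≤ Y ^ (θ - 1) :=
      Real.rpow_le_rpow_of_nonpos hYpos h.le (by linarith)
    rw [hYθ1] at h2
    have h3 : y ^ θ ≤ y * ε := e ▸ mul_le_mul_of_nonneg_left h2 hy0.le
    have h4 : (0:ℝ) ≤ ε ^ (-θ / (1 - θ)) := (Real.rpow_pos_of_pos hε _).le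
    linarith

theorem stmt6 (f : ℝ → ℝ) (r : ℝ) (hr : 0 < r)
    (hmono : MonotoneOn f (Ioi (0 : ℝ)))
    (hconc' : ConcaveOn ℝ (Ioi (0 : ℝ)) (fun x => f (x ^ (1 + r)))) :
    ConcaveOn ℝ (Ioi (0 : ℝ)) f ∧
    Tendsto (fun x => f x / x) atTop (nhds 0) ∧
    ConvexOn ℝ (Ioi (0 : ℝ)) (fun x => conjInf f (x ^ (-r))) := by
  set p : ℝ := 1 + r with hpdef
  have hp : 1 < p := by simp only [hpdef]; linarith
  have hp0 : 0 < p := by linarith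
  have hθ0 : 0 < 1/p := by positivity
  have hθ1 : 1/p < 1 := by rw [div_lt_one hp0]; linarith
  set g : ℝ → ℝ := fun x => f (x ^ p) with hgdef
  have key : ∀ x : ℝ, 0 < x → (x ^ (1/p)) ^ p = x := by
    intro x hx
    rw [← Real.rpow_mul hx.le, one_div, inv_mul_cancel₀ hp0.ne', Real.rpow_one]
  have keyf : ∀ x : ℝ, 0 < x → f x = g (x ^ (1/p)) := by
    intro x hx
    simp only [hgdef, key x hx]
  have hgmono : MonotoneOn g (Ioi 0) := by
    intro u hu v hv huv
    exact hmono (mem_Ioi.2 (Real.rpow_pos_of_pos hu p)) (mem_Ioi.2 (Real.rpow_pos_of_pos hv p))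
      (Real.rpow_le_rpow (le_of_lt hu) huv hp0.le)
  -- Part 1: concavity of f
  have hfconc : ConcaveOn ℝ (Ioi (0:ℝ)) f := by
    refine ⟨convex_Ioi 0, ?_⟩
    intro x hx y hy a b ha hb hab
    have hx0 : (0:ℝ) < x := hx
    have hy0 : (0:ℝ) < y := hy
    have hxy : a • x + b • y ∈ Ioi (0:ℝ) := (convex_Ioi 0) hx hy ha hb hab
    have hxθ : x ^ (1/p) ∈ Ioi (0:ℝ) := mem_Ioi.2 (Real.rpow_pos_of_pos hx0 _)
    have hyθ : y ^ (1/p) ∈ Ioi (0:ℝ) := mem_Ioi.2 (Real.rpow_pos_of_pos hy0 _)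
    have hmix : a • x ^ (1/p) + b • y ^ (1/p) ∈ Ioi (0:ℝ) := (convex_Ioi 0) hxθ hyθ ha hb hab
    have h1 : a • x ^ (1/p) + b • y ^ (1/p) ≤ (a • x + b • y) ^ (1/p) :=
      (Real.concaveOn_rpow hθ0.le hθ1.le).2 (mem_Ici.2 hx0.le) (mem_Ici.2 hy0.le) ha hb hab
    have h2 : a • g (x ^ (1/p)) + b • g (y ^ (1/p)) ≤ g (a • x ^ (1/p) + b • y ^ (1/p)) :=
      hconc'.2 hxθ hyθ ha hb hab
    have h3 : g (a • x ^ (1/p) + b • y ^ (1/p)) ≤ g ((a • x + b • y) ^ (1/p)) :=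
      hgmono hmix (mem_Ioi.2 (Real.rpow_pos_of_pos hxy _)) h1
    calc a • f x + b • f y = a • g (x ^ (1/p)) + b • g (y ^ (1/p)) := by
          rw [keyf x hx0, keyf y hy0]
      _ ≤ g ((a • x + b • y) ^ (1/p)) := le_trans h2 h3
      _ = f (a • x + b • y) := (keyf _ hxy).symm
  -- the upper bound f y ≤ f 1 + c y^(1/p)
  set c : ℝ := 2 * (f 1 - f ((2⁻¹ : ℝ) ^ p)) with hcdef
  have hhalf : ((2:ℝ)⁻¹) ^ p ∈ Ioi (0:ℝ) := mem_Ioi.2 (Real.rpow_pos_of_pos (by norm_num) p)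
  have hc0 : 0 ≤ c := by
    have := hmono hhalf (mem_Ioi.2 one_pos)
      (Real.rpow_le_one (by norm_num) (by norm_num) hp0.le)
    simp only [hcdef]; linarith
  have hg1 : g 1 = f 1 := by simp [hgdef, Real.one_rpow]
  have hgub : ∀ u : ℝ, 1 ≤ u → g u ≤ f 1 + c * u := by
    intro u hu
    have hg2 : g (2⁻¹ : ℝ) = f ((2⁻¹ : ℝ) ^ p) := rfl
    rcases eq_or_lt_of_le hu with h | h
    · rw [← h, hg1]; nlinarith
    · have hs := hconc'.slope_anti_adjacent (mem_Ioi.2 (by norm_num : (0:ℝ) < 2⁻¹))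
        (mem_Ioi.2 (lt_trans one_pos h)) (by norm_num : (2:ℝ)⁻¹ < 1) h
      have hs2 : g u - g 1 ≤ (g 1 - g 2⁻¹) / (1 - 2⁻¹) * (u - 1) :=
        (div_le_iff₀ (by linarith : (0:ℝ) < u - 1)).1 hs
      have he : (g 1 - g 2⁻¹) / (1 - 2⁻¹) = c := by
        rw [hg2, hg1, hcdef]; norm_num; ring
      rw [he] at hs2
      rw [hg1] at *
      nlinarith
  have hfub : ∀ y : ℝ, 0 < y → f y ≤ f 1 + c * y ^ (1/p) := by
    intro y hy
    rcases le_or_gt 1 y with h | h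
    · have h1 : (1:ℝ) ≤ y ^ (1/p) := Real.one_le_rpow h hθ0.le
      calc f y = g (y ^ (1/p)) := keyf y hy
        _ ≤ f 1 + c * y ^ (1/p) := hgub _ h1
    · have h1 : f y ≤ f 1 := hmono (mem_Ioi.2 hy) (mem_Ioi.2 one_pos) h.le
      nlinarith [Real.rpow_pos_of_pos hy (1/p)]
  -- Part 2: tendsto
  have htend : Tendsto (fun x => f x / x) atTop (nhds 0) := by
    have hlow : ∀ᶠ y in atTop, f 1 / y ≤ f y / y := by
      filter_upwards [eventually_ge_atTop (1:ℝ)] with y hy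
      have hy0 : (0:ℝ) < y := lt_of_lt_of_le one_pos hy
      have h1 : f 1 ≤ f y := hmono (mem_Ioi.2 one_pos) (mem_Ioi.2 hy0) hy
      gcongr
    have hup : ∀ᶠ y in atTop, f y / y ≤ f 1 / y + c * y ^ (1/p - 1) := by
      filter_upwards [eventually_ge_atTop (1:ℝ)] with y hy
      have hy0 : (0:ℝ) < y := lt_of_lt_of_le one_pos hy
      have h1 := hfub y hy0
      have h2 : y ^ (1/p - 1) = y ^ (1/p) / y := by
        rw [Real.rpow_sub hy0, Real.rpow_one]
      calc f y / y ≤ (f 1 + c * y ^ (1/p)) / y := by gcongr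
        _ = f 1 / y + c * y ^ (1/p - 1) := by rw [h2]; ring
    have l1 : Tendsto (fun y : ℝ => f 1 / y) atTop (nhds 0) :=
      tendsto_const_nhds.div_atTop tendsto_id
    have l2 : Tendsto (fun y : ℝ => c * y ^ (1/p - 1)) atTop (nhds 0) := by
      have h3 := (tendsto_rpow_neg_atTop (by linarith : (0:ℝ) < 1 - 1/p)).const_mul c
      simpa [show -(1 - 1/p) = 1/p - 1 by ring] using h3
    have hsum : Tendsto (fun y : ℝ => f 1 / y + c * y ^ (1/p - 1)) atTop (nhds 0) := by
      simpa using l1.add l2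
    exact tendsto_of_tendsto_of_tendsto_of_le_of_le' l1 hsum hlow hup
  -- boundedness below of the conjugate's defining set
  have hbdd : ∀ t : ℝ, 0 < t → BddBelow ((fun y => y * t - f y) '' Ioi (0:ℝ)) := by
    intro t ht
    have hc1 : (0:ℝ) < c + 1 := by linarith
    set ε : ℝ := t / (c + 1) with hεdef
    have hε0 : 0 < ε := div_pos ht hc1
    set K : ℝ := ε ^ (-(1/p) / (1 - 1/p)) with hKdef
    refine ⟨-(f 1) - c * K, ?_⟩
    rintro v ⟨y, hy, rfl⟩
    simp only
    have hy0 : (0:ℝ) < y := hy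
    have h1 := hfub y hy0
    have h2 := aux_rpow_le hθ0 hθ1 hε0 hy0.le
    rw [← hKdef] at h2
    have h3 : c * y ^ (1/p) ≤ c * (ε * y + K) := mul_le_mul_of_nonneg_left h2 hc0
    have h4 : c * ε ≤ t := by
      rw [hεdef, mul_div_assoc', div_le_iff₀ hc1]
      nlinarith
    have h5 : 0 ≤ y * (t - c * ε) := mul_nonneg hy0.le (by linarith)
    nlinarith
  refine ⟨hfconc, htend, ⟨convex_Ioi 0, ?_⟩⟩
  intro x₁ hx₁ x₂ hx₂ a b ha hb hab
  simp only [smul_eq_mul]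
  have hx₁0 : (0:ℝ) < x₁ := hx₁
  have hx₂0 : (0:ℝ) < x₂ := hx₂
  obtain h | ha' := ha.eq_or_lt
  · have hb1 : b = 1 := by linarith
    rw [← h, hb1]; norm_num
  obtain h | hb' := hb.eq_or_lt
  · have ha1 : a = 1 := by linarith
    rw [← h, ha1]; norm_num
  set x : ℝ := a * x₁ + b * x₂ with hxdef
  have hx0 : 0 < x := add_pos (mul_pos ha' hx₁0) (mul_pos hb' hx₂0)
  have hxr : ∀ u : ℝ, 0 < u → u ^ (-r) = u / u ^ p := by
    intro u hu
    rw [show -r = 1 - p by rw [hpdef]; ring, Real.rpow_sub hu, Real.rpow_one]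
  have hxrpos : ∀ u : ℝ, 0 < u → 0 < u ^ (-r) := fun u hu => Real.rpow_pos_of_pos hu _
  have hne : ∀ t : ℝ, ((fun y => y * t - f y) '' Ioi (0:ℝ)).Nonempty :=
    fun t => ⟨1 * t - f 1, 1, mem_Ioi.2 one_pos, rfl⟩
  have key2 : ∀ v₁ ∈ (fun y => y * x₁ ^ (-r) - f y) '' Ioi (0:ℝ),
      ∀ v₂ ∈ (fun y => y * x₂ ^ (-r) - f y) '' Ioi (0:ℝ),
      sInf ((fun y => y * x ^ (-r) - f y) '' Ioi (0:ℝ)) ≤ a * v₁ + b * v₂ := by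
    rintro v₁ ⟨y₁, hy₁, rfl⟩ v₂ ⟨y₂, hy₂, rfl⟩
    simp only
    have hy₁0 : (0:ℝ) < y₁ := hy₁
    have hy₂0 : (0:ℝ) < y₂ := hy₂
    have hz₁0 : 0 < y₁ ^ (1/p) := Real.rpow_pos_of_pos hy₁0 _
    have hz₂0 : 0 < y₂ ^ (1/p) := Real.rpow_pos_of_pos hy₂0 _
    set z₁ : ℝ := y₁ ^ (1/p)
    set z₂ : ℝ := y₂ ^ (1/p)
    have hz0 : 0 < a * z₁ + b * z₂ := add_pos (mul_pos ha' hz₁0) (mul_pos hb' hz₂0)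
    have hzp₁ : z₁ ^ p = y₁ := key y₁ hy₁0
    have hzp₂ : z₂ ^ p = y₂ := key y₂ hy₂0
    -- concavity part
    have hcon : a * f y₁ + b * f y₂ ≤ f ((a * z₁ + b * z₂) ^ p) := by
      have h := hconc'.2 (mem_Ioi.2 hz₁0) (mem_Ioi.2 hz₂0) ha hb hab
      simp only [smul_eq_mul, hgdef] at h
      rw [hzp₁, hzp₂] at h
      exact h
    -- Hölder / convexity of rpow part
    have hw : a * x₁ / x + b * x₂ / x = 1 := by
      rw [← add_div, ← hxdef, div_self hx0.ne']
    have hconv := (convexOn_rpow hp.le).2 (mem_Ici.2 (div_nonneg hz₁0.le hx₁0.le))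
      (mem_Ici.2 (div_nonneg hz₂0.le hx₂0.le)) (le_of_lt (div_pos (mul_pos ha' hx₁0) hx0))
      (le_of_lt (div_pos (mul_pos hb' hx₂0) hx0)) hw
    simp only [smul_eq_mul] at hconv
    have e1 : a * x₁ / x * (z₁ / x₁) = a * z₁ / x := by
      field_simp
    have e2 : b * x₂ / x * (z₂ / x₂) = b * z₂ / x := by
      field_simp
    rw [e1, e2, ← add_div] at hconv
    rw [Real.div_rpow hz0.le hx0.le, Real.div_rpow hz₁0.le hx₁0.le,
      Real.div_rpow hz₂0.le hx₂0.le] at hconv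
    have hxp : (0:ℝ) < x ^ p := Real.rpow_pos_of_pos hx0 p
    have hx₁p : (0:ℝ) < x₁ ^ p := Real.rpow_pos_of_pos hx₁0 p
    have hx₂p : (0:ℝ) < x₂ ^ p := Real.rpow_pos_of_pos hx₂0 p
    have hmul := mul_le_mul_of_nonneg_left hconv hx0.le
    have eL : x * ((a * z₁ + b * z₂) ^ p / x ^ p) = (a * z₁ + b * z₂) ^ p * (x / x ^ p) := by
      ring
    have eR : x * (a * x₁ / x * (z₁ ^ p / x₁ ^ p) + b * x₂ / x * (z₂ ^ p / x₂ ^ p)) =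
        a * (z₁ ^ p * (x₁ / x₁ ^ p)) + b * (z₂ ^ p * (x₂ / x₂ ^ p)) := by
      field_simp
    rw [eL, eR] at hmul
    have hineq : (a * z₁ + b * z₂) ^ p * x ^ (-r) ≤
        a * (y₁ * x₁ ^ (-r)) + b * (y₂ * x₂ ^ (-r)) := by
      rw [hxr x hx0, hxr x₁ hx₁0, hxr x₂ hx₂0, ← hzp₁, ← hzp₂]
      exact hmul
    have hmem : (a * z₁ + b * z₂) ^ p ∈ Ioi (0:ℝ) := mem_Ioi.2 (Real.rpow_pos_of_pos hz0 p)
    have hle := csInf_le (hbdd _ (hxrpos x hx0))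
      (mem_image_of_mem (fun y => y * x ^ (-r) - f y) hmem)
    linarith
  have hS1ne := hne (x₁ ^ (-r))
  have hS2ne := hne (x₂ ^ (-r))
  have stepA : ∀ v₂ ∈ (fun y => y * x₂ ^ (-r) - f y) '' Ioi (0:ℝ),
      sInf ((fun y => y * x ^ (-r) - f y) '' Ioi (0:ℝ)) ≤
      a * sInf ((fun y => y * x₁ ^ (-r) - f y) '' Ioi (0:ℝ)) + b * v₂ := by
    intro v₂ h₂
    have h : (sInf ((fun y => y * x ^ (-r) - f y) '' Ioi (0:ℝ)) - b * v₂) / a ≤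
        sInf ((fun y => y * x₁ ^ (-r) - f y) '' Ioi (0:ℝ)) := by
      apply le_csInf hS1ne
      intro v₁ h₁
      rw [div_le_iff₀ ha']
      linarith [key2 v₁ h₁ v₂ h₂]
    rw [div_le_iff₀ ha'] at h
    linarith
  have stepB : sInf ((fun y => y * x ^ (-r) - f y) '' Ioi (0:ℝ)) ≤
      a * sInf ((fun y => y * x₁ ^ (-r) - f y) '' Ioi (0:ℝ)) +
      b * sInf ((fun y => y * x₂ ^ (-r) - f y) '' Ioi (0:ℝ)) := by
    have h : (sInf ((fun y => y * x ^ (-r) - f y) '' Ioi (0:ℝ)) -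
        a * sInf ((fun y => y * x₁ ^ (-r) - f y) '' Ioi (0:ℝ))) / b ≤
        sInf ((fun y => y * x₂ ^ (-r) - f y) '' Ioi (0:ℝ)) := by
      apply le_csInf hS2ne
      intro v₂ h₂
      rw [div_le_iff₀ hb']
      linarith [stepA v₂ h₂]
    rw [div_le_iff₀ hb'] at h
    linarith
  exact stepB
end

section
/- Let r > 0 and let f be a non-decreasing concave function on (0,∞) with lim_{x→∞} f(x)/x = 0, such that x ↦ f(x^{1+r}) is convex on (0,∞). Then x ↦ f̌(x^{−r}) is concave on (0,∞), where f̌(t) = inf_{x>0}(x·t − f(x)). -/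
open Set Filter

lemma conjInf_bddBelow (f : ℝ → ℝ)
    (hmono : MonotoneOn f (Ioi (0 : ℝ)))
    (hlim : Tendsto (fun x => f x / x) atTop (nhds 0))
    {t : ℝ} (ht : 0 < t) :
    BddBelow ((fun x => x * t - f x) '' Ioi (0 : ℝ)) := by
  have h2 : ∀ᶠ x in atTop, f x / x < t / 2 :=
    hlim.eventually (Iio_mem_nhds (by positivity))
  obtain ⟨M, hM⟩ := eventually_atTop.mp h2
  set N := max M 1 with hN
  have hN0 : (0:ℝ) < N := lt_of_lt_of_le one_pos (le_max_right _ _)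
  refine ⟨min (-f N) 0, ?_⟩
  rintro z ⟨x, hx, rfl⟩
  simp only [mem_Ioi] at hx
  rcases le_or_gt x N with h | h
  · have hfx : f x ≤ f N := hmono hx hN0 h
    have : -f N ≤ x * t - f x := by nlinarith [mul_nonneg hx.le ht.le]
    exact le_trans (min_le_left _ _) this
  · have hxM : M ≤ x := le_trans (le_max_left M 1) h.le
    have h3 := hM x hxM
    have hfx : f x < t / 2 * x := by rwa [div_lt_iff₀ hx] at h3
    have : (0:ℝ) ≤ x * t - f x := by nlinarith [mul_pos hx ht]
    exact le_trans (min_le_right _ _) this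

lemma conjInf_le (f : ℝ → ℝ)
    (hmono : MonotoneOn f (Ioi (0 : ℝ)))
    (hlim : Tendsto (fun x => f x / x) atTop (nhds 0))
    {t w : ℝ} (ht : 0 < t) (hw : 0 < w) :
    conjInf f t ≤ w * t - f w :=
  csInf_le (conjInf_bddBelow f hmono hlim ht) ⟨w, mem_Ioi.mpr hw, rfl⟩

theorem stmt7 (f : ℝ → ℝ) (r : ℝ) (hr : 0 < r)
    (hmono : MonotoneOn f (Ioi (0 : ℝ)))
    (hconc : ConcaveOn ℝ (Ioi (0 : ℝ)) f)
    (hlim : Tendsto (fun x => f x / x) atTop (nhds 0))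
    (hconv' : ConvexOn ℝ (Ioi (0 : ℝ)) (fun x => f (x ^ (1 + r)))) :
    ConcaveOn ℝ (Ioi (0 : ℝ)) (fun x => conjInf f (x ^ (-r))) := by
  have h1r : (0:ℝ) < 1 + r := by linarith
  refine ⟨convex_Ioi 0, ?_⟩
  intro x hx y hy a b ha hb hab
  simp only [mem_Ioi] at hx hy
  show a * conjInf f (x ^ (-r)) + b * conjInf f (y ^ (-r))
      ≤ conjInf f ((a * x + b * y) ^ (-r))
  set s := a * x + b * y with hs
  have hs0 : 0 < s := by
    rcases ha.eq_or_lt with h | h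
    · have hb1 : b = 1 := by linarith
      simp [hs, ← h, hb1, hy]
    · nlinarith [mul_pos h hx, mul_nonneg hb hy.le]
  -- prove the bound for each element of the defining set of the RHS
  rw [conjInf]
  refine le_csInf (Nonempty.image _ ⟨1, mem_Ioi.mpr one_pos⟩) ?_
  rintro z ⟨w, hw, rfl⟩
  simp only [mem_Ioi] at hw
  set u := w ^ ((1+r)⁻¹) with hu
  have hu0 : 0 < u := Real.rpow_pos_of_pos hw _
  have huw : u ^ (1+r) = w := Real.rpow_inv_rpow hw.le h1r.ne'
  set u₁ := u * (x / s) with hu₁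
  set u₂ := u * (y / s) with hu₂
  have hu₁0 : 0 < u₁ := by positivity
  have hu₂0 : 0 < u₂ := by positivity
  -- convexity step
  have hkey : a * u₁ + b * u₂ = u := by
    rw [hu₁, hu₂]
    field_simp
    linear_combination u * hs
  have hC := hconv'.2 (mem_Ioi.mpr hu₁0) (mem_Ioi.mpr hu₂0) ha hb hab
  simp only [smul_eq_mul] at hC
  rw [hkey, huw] at hC
  -- hC : f w ≤ a * f (u₁ ^ (1+r)) + b * f (u₂ ^ (1+r))
  -- algebra for the linear part
  have hw₁ : u₁ ^ (1+r) = w * (x ^ (1+r) / s ^ (1+r)) := by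
    rw [hu₁, Real.mul_rpow hu0.le (by positivity), huw,
      Real.div_rpow hx.le hs0.le]
  have hw₂ : u₂ ^ (1+r) = w * (y ^ (1+r) / s ^ (1+r)) := by
    rw [hu₂, Real.mul_rpow hu0.le (by positivity), huw,
      Real.div_rpow hy.le hs0.le]
  have hxx : x ^ (1+r) * x ^ (-r) = x := by
    rw [← Real.rpow_add hx, show (1+r) + (-r) = 1 by ring, Real.rpow_one]
  have hyy : y ^ (1+r) * y ^ (-r) = y := by
    rw [← Real.rpow_add hy, show (1+r) + (-r) = 1 by ring, Real.rpow_one]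
  have hdiv : s ^ (-r) = s / s ^ (1+r) := by
    rw [show (-r) = 1 - (1+r) by ring, Real.rpow_sub hs0, Real.rpow_one]
  have hE : a * (u₁ ^ (1+r) * x ^ (-r)) + b * (u₂ ^ (1+r) * y ^ (-r))
      = w * s ^ (-r) := by
    rw [hw₁, hw₂, hdiv,
      show w * (x ^ (1+r) / s ^ (1+r)) * x ^ (-r)
        = w * (x ^ (1+r) * x ^ (-r)) / s ^ (1+r) by ring,
      show w * (y ^ (1+r) / s ^ (1+r)) * y ^ (-r)
        = w * (y ^ (1+r) * y ^ (-r)) / s ^ (1+r) by ring,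
      hxx, hyy]
    have hsne : s ^ (1+r) ≠ 0 := (Real.rpow_pos_of_pos hs0 _).ne'
    field_simp
    linear_combination w * hs
  -- combine
  have hA : conjInf f (x ^ (-r)) ≤ u₁ ^ (1+r) * x ^ (-r) - f (u₁ ^ (1+r)) :=
    conjInf_le f hmono hlim (Real.rpow_pos_of_pos hx _) (by positivity)
  have hB : conjInf f (y ^ (-r)) ≤ u₂ ^ (1+r) * y ^ (-r) - f (u₂ ^ (1+r)) :=
    conjInf_le f hmono hlim (Real.rpow_pos_of_pos hy _) (by positivity)
  have hA' := mul_le_mul_of_nonneg_left hA ha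
  have hB' := mul_le_mul_of_nonneg_left hB hb
  show a * conjInf f (x ^ (-r)) + b * conjInf f (y ^ (-r)) ≤ w * s ^ (-r) - f w
  nlinarith [hA', hB', hC, hE]
end

section
/- Let f ∈ 𝓕 be a non-decreasing convex function on (0,∞) with lim_{x→∞} f(x)/x = +∞, and for ε > 0 define f_ε(x) = ∫_{−1}^{1} φ(t) f(x e^{−εt}) dt, where φ is a smooth non-negative bump function supported in [−1,1] with integral 1. Then f_ε is also non-decreasing convex with f_ε(x)/x → +∞, and the conjugates f̂_ε converge to f̂ uniformly on every bounded closed subinterval of (0,∞) as ε → 0+. -/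
open Set Filter intervalIntegral

/-- The multiplicative-type regularization `f_ε`. -/
noncomputable def reg (φ f : ℝ → ℝ) (ε x : ℝ) : ℝ :=
  ∫ t in (-1 : ℝ)..1, φ t * f (x * Real.exp (-ε * t))

lemma integrand_cont {f : ℝ → ℝ} (hconv : ConvexOn ℝ (Ioi (0:ℝ)) f) {φ : ℝ → ℝ}
    (hφ : Continuous φ) {x ε : ℝ} (hx : 0 < x) :
    IntervalIntegrable (fun t => φ t * f (x * Real.exp (-ε * t))) MeasureTheory.volume (-1) 1 := by
  apply ContinuousOn.intervalIntegrable
  refine hφ.continuousOn.mul ?_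
  refine (hconv.continuousOn isOpen_Ioi).comp ?_ ?_
  · fun_prop
  · intro t _
    exact mul_pos hx (Real.exp_pos _)

lemma reg_mono {f φ : ℝ → ℝ}
    (hmono : MonotoneOn f (Ioi (0 : ℝ))) (hconv : ConvexOn ℝ (Ioi (0 : ℝ)) f)
    (hφ : Continuous φ) (hφ_nonneg : ∀ t, 0 ≤ φ t) (ε : ℝ) :
    MonotoneOn (reg φ f ε) (Ioi (0 : ℝ)) := by
  intro x hx y hy hxy
  apply intervalIntegral.integral_mono_on (by norm_num)
    (integrand_cont hconv hφ hx) (integrand_cont hconv hφ hy)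
  intro t _
  refine mul_le_mul_of_nonneg_left ?_ (hφ_nonneg t)
  exact hmono (mul_pos hx (Real.exp_pos _)) (mul_pos hy (Real.exp_pos _))
    (mul_le_mul_of_nonneg_right hxy (Real.exp_pos _).le)

lemma reg_convex {f φ : ℝ → ℝ}
    (hconv : ConvexOn ℝ (Ioi (0 : ℝ)) f)
    (hφ : Continuous φ) (hφ_nonneg : ∀ t, 0 ≤ φ t) (ε : ℝ) :
    ConvexOn ℝ (Ioi (0 : ℝ)) (reg φ f ε) := by
  refine ⟨convex_Ioi 0, ?_⟩
  intro x hx y hy p q hp hq hpq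
  simp only [smul_eq_mul] at *
  have hx' : (0:ℝ) < x := hx
  have hy' : (0:ℝ) < y := hy
  have hz : (0:ℝ) < p * x + q * y := by
    nlinarith [mul_nonneg hp (sub_nonneg.2 (min_le_left x y)),
      mul_nonneg hq (sub_nonneg.2 (min_le_right x y)), lt_min hx' hy']
  have key : reg φ f ε (p * x + q * y) ≤
      ∫ t in (-1:ℝ)..1, (p * (φ t * f (x * Real.exp (-ε * t)))
        + q * (φ t * f (y * Real.exp (-ε * t)))) := by
    apply intervalIntegral.integral_mono_on (by norm_num)
      (integrand_cont hconv hφ hz)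
      (((integrand_cont hconv hφ hx').const_mul p).add
        ((integrand_cont hconv hφ hy').const_mul q))
    intro t _
    have hmem1 : x * Real.exp (-ε * t) ∈ Ioi (0:ℝ) := mul_pos hx' (Real.exp_pos _)
    have hmem2 : y * Real.exp (-ε * t) ∈ Ioi (0:ℝ) := mul_pos hy' (Real.exp_pos _)
    have := hconv.2 hmem1 hmem2 hp hq hpq
    simp only [smul_eq_mul] at this
    have harg : (p * x + q * y) * Real.exp (-ε * t)
        = p * (x * Real.exp (-ε * t)) + q * (y * Real.exp (-ε * t)) := by ring
    rw [harg]
    nlinarith [hφ_nonneg t, this]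
  rw [intervalIntegral.integral_add ((integrand_cont hconv hφ hx').const_mul p)
      ((integrand_cont hconv hφ hy').const_mul q),
    intervalIntegral.integral_const_mul, intervalIntegral.integral_const_mul] at key
  exact key

lemma int_const {φ : ℝ → ℝ} (hφ_int : ∫ t in (-1 : ℝ)..1, φ t = 1) (c : ℝ) :
    ∫ t in (-1 : ℝ)..1, φ t * c = c := by
  rw [intervalIntegral.integral_mul_const, hφ_int, one_mul]

lemma reg_sandwich {f φ : ℝ → ℝ}
    (hmono : MonotoneOn f (Ioi (0 : ℝ)))
    (hconv : ConvexOn ℝ (Ioi (0 : ℝ)) f)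
    (hφ : Continuous φ)
    (hφ_nonneg : ∀ t, 0 ≤ φ t)
    (hφ_int : ∫ t in (-1 : ℝ)..1, φ t = 1)
    {x ε : ℝ} (hx : 0 < x) (hε : 0 < ε) :
    f (x * Real.exp (-ε)) ≤ reg φ f ε x ∧ reg φ f ε x ≤ f (x * Real.exp ε) := by
  have hint := integrand_cont hconv hφ (ε := ε) hx
  constructor
  · rw [← int_const hφ_int (f (x * Real.exp (-ε)))]
    apply intervalIntegral.integral_mono_on (by norm_num)
      ((hφ.mul continuous_const).intervalIntegrable _ _) hint
    intro t ht
    apply mul_le_mul_of_nonneg_left _ (hφ_nonneg t)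
    apply hmono (mul_pos hx (Real.exp_pos _)) (mul_pos hx (Real.exp_pos _))
    apply mul_le_mul_of_nonneg_left _ hx.le
    apply Real.exp_le_exp.2
    nlinarith [ht.2]
  · rw [← int_const hφ_int (f (x * Real.exp ε))]
    apply intervalIntegral.integral_mono_on (by norm_num) hint
      ((hφ.mul continuous_const).intervalIntegrable _ _)
    intro t ht
    apply mul_le_mul_of_nonneg_left _ (hφ_nonneg t)
    apply hmono (mul_pos hx (Real.exp_pos _)) (mul_pos hx (Real.exp_pos _))
    apply mul_le_mul_of_nonneg_left _ hx.le
    apply Real.exp_le_exp.2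
    nlinarith [ht.1]

lemma reg_tendsto {f φ : ℝ → ℝ}
    (hmono : MonotoneOn f (Ioi (0 : ℝ))) (hconv : ConvexOn ℝ (Ioi (0 : ℝ)) f)
    (hlim : Tendsto (fun x => f x / x) atTop atTop)
    (hφ : Continuous φ) (hφ_nonneg : ∀ t, 0 ≤ φ t)
    (hφ_int : ∫ t in (-1 : ℝ)..1, φ t = 1)
    {ε : ℝ} (hε : 0 < ε) :
    Tendsto (fun x => reg φ f ε x / x) atTop atTop := by
  have e_pos := Real.exp_pos (-ε)
  have h1 : Tendsto (fun x : ℝ => f (x * Real.exp (-ε)) / (x * Real.exp (-ε))) atTop atTop :=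
    hlim.comp (Tendsto.atTop_mul_const e_pos tendsto_id)
  have h2 : Tendsto (fun x : ℝ => f (x * Real.exp (-ε)) / x) atTop atTop := by
    have h3 := h1.atTop_mul_const e_pos
    apply h3.congr'
    filter_upwards [eventually_gt_atTop (0:ℝ)] with x hx
    field_simp
  apply tendsto_atTop_mono' _ _ h2
  filter_upwards [eventually_gt_atTop (0:ℝ)] with x hx
  exact (div_le_div_iff_of_pos_right hx).2 (reg_sandwich hmono hconv hφ hφ_nonneg hφ_int hx hε).1

lemma f_lb {f : ℝ → ℝ} (hmono : MonotoneOn f (Ioi (0:ℝ)))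
    (hconv : ConvexOn ℝ (Ioi (0:ℝ)) f) :
    ∀ x ∈ Ioi (0:ℝ), -(2*|f 1| + |f 2|) ≤ f x := by
  intro x hx
  have hx' : (0:ℝ) < x := hx
  have e1 := neg_abs_le (f 1); have e2 := le_abs_self (f 1)
  have e3 := le_abs_self (f 2); have e4 := neg_abs_le (f 2)
  rcases le_or_gt 1 x with h1 | h1
  · have := hmono (by norm_num : (1:ℝ) ∈ Ioi 0) hx h1
    linarith
  · have h2x : (0:ℝ) < 2 - x := by linarith
    have ha : (0:ℝ) ≤ 1/(2-x) := by positivity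
    have hb : (0:ℝ) ≤ (1-x)/(2-x) := by
      apply div_nonneg (by linarith) h2x.le
    have hs : 1/(2-x) + (1-x)/(2-x) = 1 := by field_simp; ring
    have hkey := hconv.2 hx (show (2:ℝ) ∈ Ioi 0 by norm_num) ha hb hs
    have hcomb : (1/(2-x)) • x + ((1-x)/(2-x)) • (2:ℝ) = 1 := by
      simp only [smul_eq_mul]; field_simp; ring
    rw [hcomb] at hkey
    simp only [smul_eq_mul] at hkey
    have hkey' : f 1 * (2 - x) ≤ f x + (1-x) * f 2 := by
      have := mul_le_mul_of_nonneg_right hkey h2x.le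
      calc f 1 * (2-x) ≤ (1 / (2 - x) * f x + (1 - x) / (2 - x) * f 2) * (2-x) := this
        _ = f x + (1-x) * f 2 := by field_simp
    nlinarith

lemma conj_ub {f : ℝ → ℝ} {m : ℝ} (hlb : ∀ x ∈ Ioi (0:ℝ), m ≤ f x)
    (hlim : Tendsto (fun x => f x / x) atTop atTop) (t : ℝ) :
    ∃ B, ∀ x ∈ Ioi (0:ℝ), x * t - f x ≤ B := by
  obtain ⟨X, hX⟩ := (hlim.eventually_ge_atTop (t+1)).exists_forall_of_atTop
  set X1 := max X 1 with hX1
  refine ⟨max (X1*|t| - m) 0, ?_⟩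
  intro x hx
  have hx' : (0:ℝ) < x := hx
  rcases le_or_gt x X1 with h | h
  · refine le_trans ?_ (le_max_left _ _)
    have := hlb x hx
    nlinarith [le_abs_self t, abs_nonneg t]
  · refine le_trans ?_ (le_max_right _ _)
    have h1 : (1:ℝ) ≤ x := le_trans (le_max_right X 1) h.le
    have h2 : t + 1 ≤ f x / x := hX x (le_trans (le_max_left X 1) h.le)
    have h3 : (t+1) * x ≤ f x := by
      rw [← le_div_iff₀ hx']; exact h2
    nlinarith

lemma conj_bddAbove {f : ℝ → ℝ} {m : ℝ} (hlb : ∀ x ∈ Ioi (0:ℝ), m ≤ f x)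
    (hlim : Tendsto (fun x => f x / x) atTop atTop) (t : ℝ) :
    BddAbove ((fun x => x * t - f x) '' Ioi (0:ℝ)) := by
  obtain ⟨B, hB⟩ := conj_ub hlb hlim t
  exact ⟨B, by rintro z ⟨x, hx, rfl⟩; exact hB x hx⟩

lemma conj_nonempty (f : ℝ → ℝ) (t : ℝ) :
    ((fun x => x * t - f x) '' Ioi (0:ℝ)).Nonempty :=
  ⟨_, mem_image_of_mem _ (show (1:ℝ) ∈ Ioi 0 by norm_num)⟩

lemma le_conjSup {f : ℝ → ℝ} {t : ℝ}
    (hbdd : BddAbove ((fun x => x * t - f x) '' Ioi (0:ℝ)))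
    {x : ℝ} (hx : 0 < x) : x * t - f x ≤ conjSup f t :=
  le_csSup hbdd (mem_image_of_mem _ hx)

lemma conjSup_le {f : ℝ → ℝ} {t B : ℝ}
    (h : ∀ x ∈ Ioi (0:ℝ), x * t - f x ≤ B) : conjSup f t ≤ B :=
  csSup_le (conj_nonempty f t) (by rintro z ⟨x, hx, rfl⟩; exact h x hx)

lemma conj_lip {f : ℝ → ℝ} {m a b : ℝ} (ha : 0 < a)
    (hlb : ∀ x ∈ Ioi (0:ℝ), m ≤ f x)
    (hlim : Tendsto (fun x => f x / x) atTop atTop) :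
    ∃ X : ℝ, 1 ≤ X ∧ ∀ s t : ℝ, a/2 ≤ s → s ≤ t → t ≤ 2*b →
      conjSup f t - conjSup f s ≤ X * (t - s) := by
  obtain ⟨X0, hX0⟩ := (hlim.eventually_ge_atTop (2*b+1)).exists_forall_of_atTop
  set X := max (max X0 1) (f 1 - a/2) with hXdef
  have hX1 : (1:ℝ) ≤ X := le_trans (le_max_right X0 1) (le_max_left _ _)
  refine ⟨X, hX1, ?_⟩
  intro s t hs hst ht
  rw [sub_le_iff_le_add]
  apply conjSup_le
  intro x hx
  have hx' : (0:ℝ) < x := hx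
  have hbdds := conj_bddAbove hlb hlim s
  have hlow : a/2 - f 1 ≤ conjSup f s := by
    have h0 := le_conjSup (f := f) (t := s) hbdds (show (0:ℝ)<1 by norm_num)
    have : a/2 - f 1 ≤ 1 * s - f 1 := by linarith
    linarith
  rcases le_or_gt x X with h | h
  · have h1 : x * s - f x ≤ conjSup f s := le_conjSup hbdds hx'
    nlinarith
  · have hxX0 : X0 ≤ x :=
      le_trans (le_trans (le_max_left X0 1) (le_max_left _ _)) h.le
    have h2 : (2*b+1) * x ≤ f x := by
      rw [← le_div_iff₀ hx']; exact hX0 x hxX0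
    have hXf : f 1 - a/2 ≤ X := le_max_right _ _
    have hXpos : (0:ℝ) < X := lt_of_lt_of_le zero_lt_one hX1
    have hp1 : x * (t - (2*b+1)) ≤ x * (-1) :=
      mul_le_mul_of_nonneg_left (by linarith) hx'.le
    have hp2 : 0 ≤ X * (t - s) := mul_nonneg hXpos.le (by linarith)
    nlinarith

variable {f φ : ℝ → ℝ} {m : ℝ}

lemma conj_reg_le
    (hmono : MonotoneOn f (Ioi (0:ℝ))) (hconv : ConvexOn ℝ (Ioi (0:ℝ)) f)
    (hφ : Continuous φ) (hφ_nonneg : ∀ t, 0 ≤ φ t) (hφ_int : ∫ t in (-1:ℝ)..1, φ t = 1)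
    (hlb : ∀ x ∈ Ioi (0:ℝ), m ≤ f x) (hlim : Tendsto (fun x => f x / x) atTop atTop)
    {ε t : ℝ} (hε : 0 < ε) :
    conjSup (reg φ f ε) t ≤ conjSup f (Real.exp ε * t) := by
  apply conjSup_le
  intro x hx
  have hx' : (0:ℝ) < x := hx
  have h1 := (reg_sandwich hmono hconv hφ hφ_nonneg hφ_int hx' hε).1
  have heq : (x * Real.exp (-ε)) * (Real.exp ε * t) = x * t := by
    rw [Real.exp_neg]; field_simp
  have h2 : x * t - reg φ f ε x ≤
      (x * Real.exp (-ε)) * (Real.exp ε * t) - f (x * Real.exp (-ε)) := by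
    rw [heq]; linarith
  exact le_trans h2 (le_conjSup (conj_bddAbove hlb hlim _) (mul_pos hx' (Real.exp_pos _)))

lemma conj_reg_ge
    (hmono : MonotoneOn f (Ioi (0:ℝ))) (hconv : ConvexOn ℝ (Ioi (0:ℝ)) f)
    (hφ : Continuous φ) (hφ_nonneg : ∀ t, 0 ≤ φ t) (hφ_int : ∫ t in (-1:ℝ)..1, φ t = 1)
    (hlb : ∀ x ∈ Ioi (0:ℝ), m ≤ f x) (hlim : Tendsto (fun x => f x / x) atTop atTop)
    {ε t : ℝ} (hε : 0 < ε) :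
    conjSup f (Real.exp (-ε) * t) ≤ conjSup (reg φ f ε) t := by
  have hbddreg : BddAbove ((fun x => x * t - reg φ f ε x) '' Ioi (0:ℝ)) := by
    obtain ⟨B, hB⟩ := conj_ub hlb hlim (Real.exp ε * t)
    refine ⟨B, ?_⟩
    rintro z ⟨x, hx, rfl⟩
    have hx' : (0:ℝ) < x := hx
    have h1 := (reg_sandwich hmono hconv hφ hφ_nonneg hφ_int hx' hε).1
    have heq : (x * Real.exp (-ε)) * (Real.exp ε * t) = x * t := by
      rw [Real.exp_neg]; field_simp
    have h3 := hB (x * Real.exp (-ε)) (mul_pos hx' (Real.exp_pos _))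
    show x * t - reg φ f ε x ≤ B
    linarith
  apply conjSup_le
  intro y hy
  have hy' : (0:ℝ) < y := hy
  have hx' : 0 < y * Real.exp (-ε) := mul_pos hy' (Real.exp_pos _)
  have h2 := (reg_sandwich hmono hconv hφ hφ_nonneg hφ_int hx' hε).2
  have hxe : y * Real.exp (-ε) * Real.exp ε = y := by rw [Real.exp_neg]; field_simp
  rw [hxe] at h2
  have hxt : y * Real.exp (-ε) * t = y * (Real.exp (-ε) * t) := by ring
  have h4 : y * (Real.exp (-ε) * t) - f y ≤
      y * Real.exp (-ε) * t - reg φ f ε (y * Real.exp (-ε)) := by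
    rw [hxt]; linarith
  exact le_trans h4 (le_csSup hbddreg (mem_image_of_mem _ hx'))

lemma uniform_part (f φ : ℝ → ℝ)
    (hmono : MonotoneOn f (Ioi (0 : ℝ)))
    (hconv : ConvexOn ℝ (Ioi (0 : ℝ)) f)
    (hlim : Tendsto (fun x => f x / x) atTop atTop)
    (hφc : Continuous φ)
    (hφ_nonneg : ∀ t, 0 ≤ φ t)
    (hφ_int : ∫ t in (-1 : ℝ)..1, φ t = 1)
    (a b : ℝ) (ha : 0 < a) (hab : a ≤ b) :
    TendstoUniformlyOn (fun ε => conjSup (reg φ f ε)) (conjSup f)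
      (nhdsWithin 0 (Ioi (0:ℝ))) (Icc a b) := by
  have hb : 0 < b := lt_of_lt_of_le ha hab
  have hlb := f_lb hmono hconv
  obtain ⟨X, hX1, hLip⟩ := conj_lip (b := b) ha hlb hlim
  have hXpos : (0:ℝ) < X := lt_of_lt_of_le zero_lt_one hX1
  have hXb : 0 < X * b := mul_pos hXpos hb
  rw [Metric.tendstoUniformlyOn_iff]
  intro η hη
  set r := η / (X*b+1) with hrdef
  have hrpos : 0 < r := by positivity
  have hr : r * (X*b+1) = η := by rw [hrdef]; field_simp
  set δ := min (Real.log 2) (Real.log (1 + r)) with hδdef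
  have hδpos : 0 < δ :=
    lt_min (Real.log_pos (by norm_num)) (Real.log_pos (by linarith))
  filter_upwards [Ioo_mem_nhdsGT_of_mem (show (0:ℝ) ∈ Ico 0 δ from ⟨le_refl _, hδpos⟩)]
    with ε hε t ht
  have hε0 : 0 < ε := hε.1
  have ht0 : 0 < t := lt_of_lt_of_le ha ht.1
  have hE1 : 1 < Real.exp ε := by nlinarith [Real.add_one_le_exp ε]
  have hE2 : Real.exp ε < 2 := by
    have := Real.exp_lt_exp.2 (lt_of_lt_of_le hε.2 (min_le_left _ _))
    rwa [Real.exp_log (by norm_num)] at this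
  have hE3 : Real.exp ε < 1 + r := by
    have := Real.exp_lt_exp.2 (lt_of_lt_of_le hε.2 (min_le_right _ _))
    rwa [Real.exp_log (by linarith)] at this
  have hprod : Real.exp (-ε) * Real.exp ε = 1 := by
    rw [← Real.exp_add]; simp
  have hEneg1 : Real.exp (-ε) < 1 := by nlinarith [Real.exp_pos (-ε)]
  have hEneghalf : 1/2 < Real.exp (-ε) := by nlinarith [Real.exp_pos (-ε)]
  have up := conj_reg_le (t := t) hmono hconv hφc hφ_nonneg hφ_int hlb hlim hε0
  have lo := conj_reg_ge (t := t) hmono hconv hφc hφ_nonneg hφ_int hlb hlim hε0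
  have pm1 : Real.exp ε * t ≤ 2 * t := mul_le_mul_of_nonneg_right hE2.le ht0.le
  have pm2 : 1 * t ≤ Real.exp ε * t := mul_le_mul_of_nonneg_right hE1.le ht0.le
  have pm3 : (1/2) * t ≤ Real.exp (-ε) * t := mul_le_mul_of_nonneg_right hEneghalf.le ht0.le
  have pm4 : Real.exp (-ε) * t ≤ 1 * t := mul_le_mul_of_nonneg_right hEneg1.le ht0.le
  have hA : conjSup f (Real.exp ε * t) - conjSup f t ≤ X * (Real.exp ε * t - t) :=
    hLip t (Real.exp ε * t) (by linarith [ht.1]) (by linarith) (by linarith [ht.2])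
  have hB : conjSup f t - conjSup f (Real.exp (-ε) * t) ≤ X * (t - Real.exp (-ε) * t) :=
    hLip (Real.exp (-ε) * t) t (by linarith [ht.1]) (by linarith) (by linarith [ht.2])
  -- numeric bounds
  have h5 : 1 - Real.exp (-ε) ≤ Real.exp ε - 1 := by
    nlinarith [sq_nonneg (Real.exp ε - 1), Real.exp_pos (-ε)]
  have hXt : X * t ≤ X * b := mul_le_mul_of_nonneg_left ht.2 hXpos.le
  have hchain : X * b * (Real.exp ε - 1) < η := by
    have h6 : X * b * (Real.exp ε - 1) < X * b * r :=
      (mul_lt_mul_iff_right₀ hXb).2 (by linarith)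
    have h7 : X * b * r = η - r := by linear_combination hr
    linarith
  have key1 : X * (Real.exp ε * t - t) < η := by
    have heq1 : X * (Real.exp ε * t - t) = (X * t) * (Real.exp ε - 1) := by ring
    have h8 := mul_le_mul_of_nonneg_right hXt (by linarith : (0:ℝ) ≤ Real.exp ε - 1)
    linarith
  have key2 : X * (t - Real.exp (-ε) * t) < η := by
    have heq : X * (t - Real.exp (-ε) * t) = (X * t) * (1 - Real.exp (-ε)) := by ring
    have h7 : (X * t) * (1 - Real.exp (-ε)) ≤ (X * t) * (Real.exp ε - 1) :=
      mul_le_mul_of_nonneg_left h5 (by positivity)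
    have h8 := mul_le_mul_of_nonneg_right hXt (by linarith : (0:ℝ) ≤ Real.exp ε - 1)
    linarith
  rw [Real.dist_eq, abs_sub_lt_iff]
  constructor
  · linarith
  · linarith

theorem stmt8 (f φ : ℝ → ℝ)
    (hmono : MonotoneOn f (Ioi (0 : ℝ)))
    (hconv : ConvexOn ℝ (Ioi (0 : ℝ)) f)
    (hlim : Tendsto (fun x => f x / x) atTop atTop)
    (hφ_smooth : ContDiff ℝ (⊤ : ℕ∞) φ)
    (hφ_nonneg : ∀ t, 0 ≤ φ t)
    (hφ_supp : Function.support φ ⊆ Icc (-1 : ℝ) 1)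
    (hφ_int : ∫ t in (-1 : ℝ)..1, φ t = 1) :
    (∀ ε : ℝ, 0 < ε →
      MonotoneOn (reg φ f ε) (Ioi (0 : ℝ)) ∧
      ConvexOn ℝ (Ioi (0 : ℝ)) (reg φ f ε) ∧
      Tendsto (fun x => reg φ f ε x / x) atTop atTop) ∧
    (∀ a b : ℝ, 0 < a → a ≤ b →
      TendstoUniformlyOn (fun ε => conjSup (reg φ f ε)) (conjSup f)
        (nhdsWithin 0 (Ioi (0 : ℝ))) (Icc a b)) := by
  have hφc : Continuous φ := hφ_smooth.continuous
  constructor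
  · intro ε hε
    exact ⟨reg_mono hmono hconv hφc hφ_nonneg ε,
      reg_convex hconv hφc hφ_nonneg ε,
      reg_tendsto hmono hconv hlim hφc hφ_nonneg hφ_int hε⟩
  · intro a b ha hab
    exact uniform_part f φ hmono hconv hlim hφc hφ_nonneg hφ_int a b ha hab
end

section
/- Let −1 ≤ q ≤ 0 and let Ψ : M_m → M_l be a strictly positive linear map. Then the map B ↦ Ψ(B^{−q})^{−1} on positive definite matrices is operator convex: for B₁, B₂ ∈ ℙ_m, Ψ(((B₁+B₂)/2)^{−q})^{−1} ≤ (Ψ(B₁^{−q})^{−1} + Ψ(B₂^{−q})^{−1})/2. -/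
set_option linter.unusedSectionVars false
set_option linter.unusedVariables false
set_option maxHeartbeats 1000000

open scoped ComplexOrder Matrix

/-- Real power of a matrix via the (Hermitian) continuous functional calculus. -/
noncomputable def mpow {n : Type*} [Fintype n] [DecidableEq n] (A : Matrix n n ℂ) (p : ℝ) : Matrix n n ℂ :=
  cfc (fun x : ℝ => x ^ p) A

section helpers

open Matrix Set

variable {n : Type*} [Fintype n] [DecidableEq n]

lemma herm_selfAdj {A : Matrix n n ℂ} (hA : A.IsHermitian) : IsSelfAdjoint A := hA

lemma qf_conj (A B : Matrix n n ℂ) (v : n → ℂ) :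
    star v ⬝ᵥ ((Bᴴ * A * B) *ᵥ v) = star (B *ᵥ v) ⬝ᵥ (A *ᵥ (B *ᵥ v)) := by
  rw [← mulVec_mulVec, ← mulVec_mulVec, dotProduct_mulVec, ← star_mulVec]

lemma posDef_conj_s10 {A : Matrix n n ℂ} (hA : A.PosDef) (B : Matrix n n ℂ) [Invertible B] :
    (Bᴴ * A * B).PosDef := by
  refine Matrix.PosDef.of_dotProduct_mulVec_pos ?_ fun v hv => ?_
  · have h1 := hA.1
    unfold Matrix.IsHermitian at *
    simp [conjTranspose_mul, h1, Matrix.mul_assoc]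
  · rw [qf_conj]
    refine hA.dotProduct_mulVec_pos fun h => hv ?_
    have h2 := mulVec_injective_of_invertible (K := ℂ) B
    exact h2 (by simpa using h)

lemma psd_smul_c {M : Matrix n n ℂ} (hM : M.PosSemidef) {c : ℂ} (hc : 0 ≤ c) :
    (c • M).PosSemidef := by
  have hcc : star c = c := by
    rw [RCLike.star_def]
    exact Complex.conj_eq_iff_im.2 ((Complex.nonneg_iff.1 hc).2).symm
  refine Matrix.PosSemidef.of_dotProduct_mulVec_nonneg ?_ fun v => ?_
  · have h1 := hM.1
    unfold Matrix.IsHermitian at *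
    rw [conjTranspose_smul, h1, hcc]
  · rw [smul_mulVec, dotProduct_smul, smul_eq_mul]
    exact mul_nonneg hc (hM.dotProduct_mulVec_nonneg v)

lemma pd_smul_c {M : Matrix n n ℂ} (hM : M.PosDef) {c : ℂ} (hc : 0 < c) :
    (c • M).PosDef := by
  refine Matrix.PosDef.of_dotProduct_mulVec_pos (psd_smul_c hM.posSemidef hc.le).1 fun v hv => ?_
  rw [smul_mulVec, dotProduct_smul, smul_eq_mul]
  exact mul_pos hc (hM.dotProduct_mulVec_pos hv)

lemma herm_qf_real {M : Matrix n n ℂ} (hM : M.IsHermitian) (v : n → ℂ) :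
    (star v ⬝ᵥ (M *ᵥ v)).im = 0 := by
  have h1 : star (star v ⬝ᵥ (M *ᵥ v)) = star (M *ᵥ v) ⬝ᵥ v := by
    rw [star_dotProduct, star_star]
  rw [star_mulVec, hM.eq, ← dotProduct_mulVec] at h1
  exact Complex.conj_eq_iff_im.1 h1

lemma posSemidef_of_re {M : Matrix n n ℂ} (hM : M.IsHermitian)
    (h : ∀ v, 0 ≤ (star v ⬝ᵥ (M *ᵥ v)).re) : M.PosSemidef :=
  Matrix.PosSemidef.of_dotProduct_mulVec_nonneg hM (fun v => Complex.nonneg_iff.2 ⟨h v, (herm_qf_real hM v).symm⟩)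

lemma spectrum_pos {A : Matrix n n ℂ} (hA : A.PosDef) : ∀ x ∈ spectrum ℝ A, 0 < x := by
  rw [hA.1.spectrum_real_eq_range_eigenvalues]
  rintro x ⟨i, rfl⟩
  exact hA.eigenvalues_pos i

lemma contOn_pos {f : ℝ → ℝ} (hf : ∀ x ∈ Ioi (0:ℝ), ContinuousAt f x) {A : Matrix n n ℂ}
    (hA : A.PosDef) : ContinuousOn f (spectrum ℝ A) :=
  fun x hx => (hf x (spectrum_pos hA x hx)).continuousWithinAt

noncomputable def unitary_invertible {A : Matrix n n ℂ} (hA : A.IsHermitian) :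
    Invertible (star (hA.eigenvectorUnitary : Matrix n n ℂ)) :=
  ⟨(hA.eigenvectorUnitary : Matrix n n ℂ),
    Matrix.mem_unitaryGroup_iff.mp hA.eigenvectorUnitary.prop,
    Matrix.mem_unitaryGroup_iff'.mp hA.eigenvectorUnitary.prop⟩

lemma cfc_posSemidef {A : Matrix n n ℂ} (hA : A.IsHermitian) (f : ℝ → ℝ)
    (hf : ∀ i, 0 ≤ f (hA.eigenvalues i)) : (cfc f A).PosSemidef := by
  rw [hA.cfc_eq, Matrix.IsHermitian.cfc]
  have hd : Matrix.PosSemidef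
      (diagonal (RCLike.ofReal ∘ f ∘ hA.eigenvalues) : Matrix n n ℂ) := by
    refine Matrix.PosSemidef.diagonal fun i => ?_
    simpa using Complex.real_le_real.2 (hf i)
  have := hd.conjTranspose_mul_mul_same (B := (star (hA.eigenvectorUnitary : Matrix n n ℂ)))
  simpa [star_eq_conjTranspose] using this

lemma cfc_posDef {A : Matrix n n ℂ} (hA : A.IsHermitian) (f : ℝ → ℝ)
    (hf : ∀ i, 0 < f (hA.eigenvalues i)) : (cfc f A).PosDef := by
  rw [hA.cfc_eq, Matrix.IsHermitian.cfc]
  have hd : Matrix.PosDef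
      (diagonal (RCLike.ofReal ∘ f ∘ hA.eigenvalues) : Matrix n n ℂ) := by
    refine Matrix.PosDef.diagonal fun i => ?_
    simpa using Complex.real_lt_real.2 (hf i)
  have hu : Invertible (star (hA.eigenvectorUnitary : Matrix n n ℂ)) := unitary_invertible hA
  have := posDef_conj_s10 hd (star (hA.eigenvectorUnitary : Matrix n n ℂ))
  simpa [star_eq_conjTranspose] using this

lemma qf_cfc {A : Matrix n n ℂ} (hA : A.IsHermitian) (f : ℝ → ℝ) (v : n → ℂ) :
    star v ⬝ᵥ (cfc f A *ᵥ v) =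
      ((∑ i, f (hA.eigenvalues i) *
        Complex.normSq ((star (hA.eigenvectorUnitary : Matrix n n ℂ) *ᵥ v) i) : ℝ) : ℂ) := by
  rw [hA.cfc_eq, Matrix.IsHermitian.cfc, Unitary.conjStarAlgAut_apply]
  set U := (hA.eigenvectorUnitary : Matrix n n ℂ) with hU
  set w := star U *ᵥ v with hw
  have h1 : star v ⬝ᵥ ((U * Matrix.diagonal (RCLike.ofReal ∘ f ∘ hA.eigenvalues) * star U) *ᵥ v)
      = star w ⬝ᵥ (Matrix.diagonal (RCLike.ofReal ∘ f ∘ hA.eigenvalues) *ᵥ w) := by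
    have := qf_conj (Matrix.diagonal (RCLike.ofReal ∘ f ∘ hA.eigenvalues)) (star U) v
    rw [← this]
    rw [← star_eq_conjTranspose, star_star]
  rw [h1, dotProduct]
  push_cast
  refine Finset.sum_congr rfl fun i _ => ?_
  rw [mulVec_diagonal]
  simp only [Pi.star_apply, Function.comp_apply, RCLike.star_def]
  have hco : ∀ a : ℝ, (RCLike.ofReal a : ℂ) = (a:ℂ) := fun _ => rfl
  simp only [hco, Complex.normSq_eq_conj_mul_self]
  ring

lemma rsmul_eq (t : ℝ) (M : Matrix n n ℂ) : t • M = (t:ℂ) • M := by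
  ext i j
  simp [Complex.real_smul]

lemma contOn_rpow (p : ℝ) {A : Matrix n n ℂ} (hA : A.PosDef) :
    ContinuousOn (fun x : ℝ => x ^ p) (spectrum ℝ A) :=
  contOn_pos (fun x hx => Real.continuousAt_rpow_const x p (Or.inl (ne_of_gt hx))) hA

lemma mpow_herm {A : Matrix n n ℂ} (hA : A.IsHermitian) (p : ℝ) : (mpow A p).IsHermitian :=
  (cfc_predicate (fun x : ℝ => x ^ p) A : IsSelfAdjoint _)

lemma mpow_posDef {A : Matrix n n ℂ} (hA : A.PosDef) (p : ℝ) : (mpow A p).PosDef :=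
  cfc_posDef hA.1 _ fun i => Real.rpow_pos_of_pos (hA.eigenvalues_pos i) p

lemma mpow_add {A : Matrix n n ℂ} (hA : A.PosDef) (p s : ℝ) :
    mpow A p * mpow A s = mpow A (p + s) := by
  unfold mpow
  rw [← cfc_mul _ _ A (contOn_rpow p hA) (contOn_rpow s hA)]
  exact cfc_congr fun x hx => (Real.rpow_add (spectrum_pos hA x hx) p s).symm

lemma mpow_zero {A : Matrix n n ℂ} (hA : A.PosDef) : mpow A 0 = 1 := by
  unfold mpow
  have h : cfc (fun x : ℝ => x ^ (0:ℝ)) A = cfc (fun _ : ℝ => (1:ℝ)) A :=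
    cfc_congr fun x _ => Real.rpow_zero x
  rw [h]
  exact cfc_one ℝ A (herm_selfAdj hA.1)

lemma mpow_one {A : Matrix n n ℂ} (hA : A.PosDef) : mpow A 1 = A := by
  unfold mpow
  have h : cfc (fun x : ℝ => x ^ (1:ℝ)) A = cfc (id : ℝ → ℝ) A :=
    cfc_congr fun x _ => Real.rpow_one x
  rw [h]
  exact cfc_id ℝ A (herm_selfAdj hA.1)

lemma cfc_one' {A : Matrix n n ℂ} (hA : A.IsHermitian) : cfc (fun _ : ℝ => (1:ℝ)) A = 1 := by
  rw [show (fun _ : ℝ => (1:ℝ)) = (1 : ℝ → ℝ) from rfl]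
  exact cfc_one ℝ A (herm_selfAdj hA)

lemma mpow_neg_one {A : Matrix n n ℂ} (hA : A.PosDef) : mpow A (-1) = A⁻¹ := by
  symm
  apply Matrix.inv_eq_left_inv
  have h := mpow_add hA (-1) 1
  rw [mpow_one hA, show (-1:ℝ) + 1 = 0 from by norm_num, mpow_zero hA] at h
  exact h

lemma cfc_shift (t : ℝ) {A : Matrix n n ℂ} (hA : A.PosDef) :
    cfc (fun x : ℝ => x + t) A = A + (t:ℂ) • 1 := by
  have h := cfc_add A (fun x : ℝ => x) (fun _ : ℝ => t) (by fun_prop) (by fun_prop)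
  rw [h, cfc_id' ℝ A (herm_selfAdj hA.1), cfc_const t A (herm_selfAdj hA.1), Algebra.algebraMap_eq_smul_one, rsmul_eq]

lemma cfc_shift_inv (t : ℝ) (ht : 0 ≤ t) {A : Matrix n n ℂ} (hA : A.PosDef) :
    cfc (fun x : ℝ => (x + t)⁻¹) A = (A + (t:ℂ) • 1)⁻¹ := by
  symm
  apply Matrix.inv_eq_left_inv
  have hc : ContinuousOn (fun x : ℝ => (x + t)⁻¹) (spectrum ℝ A) :=
    contOn_pos (fun x hx => (continuous_add_right t).continuousAt.inv₀ (by have hx' : (0:ℝ) < x := hx; linarith)) hA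
  rw [← cfc_shift t hA, ← cfc_mul _ _ A hc (by fun_prop)]
  have h : cfc (fun x : ℝ => (x + t)⁻¹ * (x + t)) A = cfc (fun _ : ℝ => (1:ℝ)) A := by
    refine cfc_congr fun x hx => ?_
    have h0 : 0 < x + t := by have := spectrum_pos hA x hx; linarith
    field_simp
  rw [h]
  exact cfc_one' hA.1

lemma cfc_ratio (t : ℝ) (ht : 0 < t) {A : Matrix n n ℂ} (hA : A.PosDef) :
    cfc (fun x : ℝ => x / (x + t)) A = 1 - (t:ℂ) • (A + (t:ℂ) • 1)⁻¹ := by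
  have hc : ContinuousOn (fun x : ℝ => (x + t)⁻¹) (spectrum ℝ A) :=
    contOn_pos (fun x hx => (continuous_add_right t).continuousAt.inv₀ (by have hx' : (0:ℝ) < x := hx; linarith)) hA
  have h : cfc (fun x : ℝ => x / (x + t)) A
      = cfc (fun x : ℝ => 1 - t * (x + t)⁻¹) A := by
    refine cfc_congr fun x hx => ?_
    have hx' : 0 < x + t := by have := spectrum_pos hA x hx; linarith
    field_simp
    ring
  rw [h, cfc_sub _ _ A (by fun_prop) (by fun_prop), cfc_const_mul t _ A hc,
    cfc_shift_inv t ht.le hA, cfc_one' hA.1, rsmul_eq t ((A + (t:ℂ) • 1)⁻¹)]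

lemma half_nonneg_c : (0:ℂ) ≤ 1/2 := by
  rw [Complex.nonneg_iff]
  norm_num

lemma dot_self_eq (v : n → ℂ) : star v ⬝ᵥ v = ((∑ i, Complex.normSq (v i) : ℝ) : ℂ) := by
  rw [dotProduct]
  push_cast
  refine Finset.sum_congr rfl fun i _ => ?_
  simp only [Pi.star_apply, RCLike.star_def, Complex.normSq_eq_conj_mul_self]

lemma pd_isUnit_det {M : Matrix n n ℂ} (hM : M.PosDef) : IsUnit M.det :=
  isUnit_iff_ne_zero.2 (ne_of_gt hM.det_pos)

lemma half_smul_one_add_one : (1/2 : ℂ) • ((1 : Matrix n n ℂ) + 1) = 1 := by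
  rw [smul_add, ← add_smul]
  norm_num

lemma inv_convex {A B : Matrix n n ℂ} (hA : A.PosDef) (hB : B.PosDef) :
    ((1/2 : ℂ) • (A⁻¹ + B⁻¹) - ((1/2 : ℂ) • (A + B))⁻¹).PosSemidef := by
  set X := A⁻¹ with hXdef
  set Y := B⁻¹ with hYdef
  set S := X + Y with hSdef
  have hX : X.PosDef := hA.inv
  have hY : Y.PosDef := hB.inv
  have hS : S.PosDef := hX.add hY
  have hAX : A * X = 1 := Matrix.mul_nonsing_inv A (pd_isUnit_det hA)
  have hBY : B * Y = 1 := Matrix.mul_nonsing_inv B (pd_isUnit_det hB)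
  have hAY : A * Y + 1 = A * S := by
    rw [hSdef, Matrix.mul_add, hAX]
    try abel
  have hBX : B * X + 1 = B * S := by
    rw [hSdef, Matrix.mul_add, hBY]
    try abel
  have hSS : S * S⁻¹ = 1 := Matrix.mul_nonsing_inv S (pd_isUnit_det hS)
  have hSS' : S⁻¹ * S = 1 := Matrix.nonsing_inv_mul S (pd_isUnit_det hS)
  have e1 : (A + B) * X = B * S := by
    rw [Matrix.add_mul, hAX, ← hBX]
    try abel
  have e2 : (A + B) * Y = A * S := by
    rw [Matrix.add_mul, hBY, ← hAY]
    try abel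
  have k1 : (A + B) * (X * S⁻¹ * Y) = 1 := by
    rw [← Matrix.mul_assoc, ← Matrix.mul_assoc, e1, Matrix.mul_assoc B S S⁻¹, hSS,
      Matrix.mul_one, hBY]
  have k2 : (A + B) * (Y * S⁻¹ * X) = 1 := by
    rw [← Matrix.mul_assoc, ← Matrix.mul_assoc, e2, Matrix.mul_assoc A S S⁻¹, hSS,
      Matrix.mul_one, hAX]
  have hInv : ((1/2 : ℂ) • (A + B))⁻¹ = X * S⁻¹ * Y + Y * S⁻¹ * X := by
    apply Matrix.inv_eq_right_inv
    rw [Matrix.smul_mul, Matrix.mul_add, k1, k2, half_smul_one_add_one]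
  have hXS : X * S⁻¹ * S = X := by rw [Matrix.mul_assoc, hSS', Matrix.mul_one]
  have hYS : Y * S⁻¹ * S = Y := by rw [Matrix.mul_assoc, hSS', Matrix.mul_one]
  have eX : S - Y = X := by rw [hSdef]; abel
  have eY : S - X = Y := by rw [hSdef]; abel
  have hXX : X * S⁻¹ * X = X - X * S⁻¹ * Y :=
    calc X * S⁻¹ * X = X * S⁻¹ * (S - Y) := by rw [eX]
      _ = X * S⁻¹ * S - X * S⁻¹ * Y := by rw [Matrix.mul_sub]
      _ = X - X * S⁻¹ * Y := by rw [hXS]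
  have hYY : Y * S⁻¹ * Y = Y - Y * S⁻¹ * X :=
    calc Y * S⁻¹ * Y = Y * S⁻¹ * (S - X) := by rw [eY]
      _ = Y * S⁻¹ * S - Y * S⁻¹ * X := by rw [Matrix.mul_sub]
      _ = Y - Y * S⁻¹ * X := by rw [hYS]
  have hexp : (X - Y) * S⁻¹ * (X - Y)
      = X + Y - (X * S⁻¹ * Y + X * S⁻¹ * Y) - (Y * S⁻¹ * X + Y * S⁻¹ * X) := by
    rw [Matrix.sub_mul, Matrix.mul_sub, Matrix.sub_mul, Matrix.sub_mul, hXX, hYY]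
    abel
  have hfin : (1/2 : ℂ) • (X + Y) - ((1/2 : ℂ) • (A + B))⁻¹
      = (1/2 : ℂ) • ((X - Y) * S⁻¹ * (X - Y)) := by
    rw [hInv, hexp]
    module
  rw [← hSdef] at hfin
  rw [hfin]
  have hC : (X - Y)ᴴ = X - Y := (hX.1.sub hY.1).eq
  have hpsd : ((X - Y)ᴴ * S⁻¹ * (X - Y)).PosSemidef :=
    (hS.inv.posSemidef).conjTranspose_mul_mul_same (X - Y)
  rw [hC] at hpsd
  exact psd_smul_c hpsd half_nonneg_c

lemma cfc_inv_eq {X : Matrix n n ℂ} (hX : X.PosDef) :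
    cfc (fun x : ℝ => x⁻¹) X = X⁻¹ := by
  have h := cfc_shift_inv 0 le_rfl hX
  simp only [Complex.ofReal_zero, zero_smul, add_zero] at h
  rw [← h]

lemma eig_le_one_of_le {X : Matrix n n ℂ} (hX : X.PosDef)
    (h1X : ((1 : Matrix n n ℂ) - X).PosSemidef) (i : n) : hX.1.eigenvalues i ≤ 1 := by
  set v : n → ℂ := (WithLp.equiv 2 (n → ℂ)) (hX.1.eigenvectorBasis i) with hv
  have hXv : X *ᵥ v = hX.1.eigenvalues i • v := hX.1.mulVec_eigenvectorBasis i
  have hvne : v ≠ 0 := by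
    intro h
    have := hX.1.eigenvectorBasis.toBasis.ne_zero i
    apply this
    have : hX.1.eigenvectorBasis i = 0 := by
      apply (WithLp.equiv 2 (n → ℂ)).injective
      simpa [← hv] using h
    simpa [OrthonormalBasis.coe_toBasis] using this
  have hsum : 0 < ∑ j, Complex.normSq (v j) := by
    have : ∃ j, v j ≠ 0 := Function.ne_iff.mp hvne
    obtain ⟨j, hj⟩ := this
    refine Finset.sum_pos' (fun k _ => Complex.normSq_nonneg _) ⟨j, Finset.mem_univ j, ?_⟩
    exact Complex.normSq_pos.2 hj
  have hre := h1X.re_dotProduct_nonneg v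
  have hcomp : star v ⬝ᵥ (((1 : Matrix n n ℂ) - X) *ᵥ v)
      = ((1 - hX.1.eigenvalues i) : ℝ) • (star v ⬝ᵥ v) := by
    rw [Matrix.sub_mulVec, Matrix.one_mulVec, hXv, dotProduct_sub, dotProduct_smul]
    rw [sub_smul, one_smul]
  rw [hcomp, dot_self_eq] at hre
  have : RCLike.re (((1 - hX.1.eigenvalues i) : ℝ) • ((∑ j, Complex.normSq (v j) : ℝ) : ℂ))
      = (1 - hX.1.eigenvalues i) * ∑ j, Complex.normSq (v j) := by
    rw [Complex.real_smul, ← Complex.ofReal_mul]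
    simp
  rw [this] at hre
  nlinarith
lemma inv_antitone {A B : Matrix n n ℂ} (hA : A.PosDef) (hB : B.PosDef)
    (h : (B - A).PosSemidef) : (A⁻¹ - B⁻¹).PosSemidef := by
  set R := mpow B (1/2 : ℝ) with hRdef
  set R' := mpow B (-(1/2) : ℝ) with hR'def
  have hR : R.PosDef := mpow_posDef hB _
  have hR' : R'.PosDef := mpow_posDef hB _
  have hR'h : R'ᴴ = R' := (mpow_herm hB.1 _).eq
  have hRR' : R * R' = 1 := by
    rw [hRdef, hR'def, mpow_add hB, show (1/2 : ℝ) + (-(1/2)) = 0 from by norm_num, mpow_zero hB]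
  have hR'R : R' * R = 1 := by
    rw [hRdef, hR'def, mpow_add hB, show (-(1/2) : ℝ) + (1/2) = 0 from by norm_num, mpow_zero hB]
  have hR'B : R' * B = R := by
    have := mpow_add hB (-(1/2) : ℝ) 1
    rw [mpow_one hB, show (-(1/2) : ℝ) + 1 = 1/2 from by norm_num] at this
    rw [hR'def, this, hRdef]
  have hR'BR' : R' * B * R' = 1 := by
    rw [hR'B, hRR']
  have hinvR' : Invertible R' := ⟨R, hRR', hR'R⟩
  set Xm := R' * A * R' with hXmdef
  have hXm : Xm.PosDef := by
    have := posDef_conj_s10 hA R'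
    rwa [hR'h] at this
  have h1Xm : ((1 : Matrix n n ℂ) - Xm).PosSemidef := by
    have hconj := h.conjTranspose_mul_mul_same (B := R')
    rw [hR'h] at hconj
    have : R' * (B - A) * R' = 1 - Xm := by
      rw [Matrix.mul_sub, Matrix.sub_mul, hR'BR', hXmdef]
    rwa [this] at hconj
  have heig : ∀ i, 0 ≤ (hXm.1.eigenvalues i)⁻¹ - 1 := by
    intro i
    have h1 := hXm.eigenvalues_pos i
    have h2 := eig_le_one_of_le hXm h1Xm i
    have : (1:ℝ) ≤ (hXm.1.eigenvalues i)⁻¹ := by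
      rw [le_inv_comm₀ one_pos h1]
      simpa using h2
    linarith
  have hXminv : Xm⁻¹ - 1 = cfc (fun x : ℝ => x⁻¹ - 1) Xm := by
    have hc : ContinuousOn (fun x : ℝ => x⁻¹) (spectrum ℝ Xm) :=
      contOn_pos (fun x hx => continuousAt_inv₀ (ne_of_gt hx)) hXm
    rw [cfc_sub _ _ Xm hc (by fun_prop), cfc_inv_eq hXm, cfc_one' hXm.1]
  have hpsd : (Xm⁻¹ - 1).PosSemidef := by
    rw [hXminv]
    exact cfc_posSemidef hXm.1 _ heig
  have hA'A : A⁻¹ * A = 1 := Matrix.nonsing_inv_mul A (pd_isUnit_det hA)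
  have hXmInvEq : Xm⁻¹ = R * A⁻¹ * R := by
    apply Matrix.inv_eq_left_inv
    calc R * A⁻¹ * R * (R' * A * R')
        = R * A⁻¹ * ((R * R') * (A * R')) := by
          rw [Matrix.mul_assoc (R * A⁻¹) R _, Matrix.mul_assoc R' A R', ← Matrix.mul_assoc R R' _,
            ← Matrix.mul_assoc (R * R') A R']
      _ = R * (A⁻¹ * (A * R')) := by rw [hRR', Matrix.one_mul, Matrix.mul_assoc]
      _ = R * R' := by rw [← Matrix.mul_assoc A⁻¹ A R', hA'A, Matrix.one_mul]
      _ = 1 := hRR'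
  have hAinv : A⁻¹ = R' * Xm⁻¹ * R' := by
    rw [hXmInvEq, ← Matrix.mul_assoc, ← Matrix.mul_assoc, hR'R, Matrix.one_mul,
      Matrix.mul_assoc, hRR', Matrix.mul_one]
  have hBinv : B⁻¹ = R' * R' := by
    rw [hR'def, mpow_add hB, show (-(1/2) : ℝ) + (-(1/2)) = -1 from by norm_num, mpow_neg_one hB]
  have hkey : A⁻¹ - B⁻¹ = R' * (Xm⁻¹ - 1) * R' := by
    rw [Matrix.mul_sub, Matrix.sub_mul, Matrix.mul_one, hAinv, hBinv]
  rw [hkey]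
  have := hpsd.conjTranspose_mul_mul_same (B := R')
  rwa [hR'h] at this

section scalarint
open MeasureTheory

noncomputable def Kr (r : ℝ) : ℝ := ∫ x in Ioi (0:ℝ), x ^ (r-1) * (1 / (1 + x))

lemma ratio_contOn {r μ : ℝ} (hμ : 0 < μ) :
    ContinuousOn (fun x : ℝ => x ^ (r-1) * (μ / (μ + x))) (Ioi (0:ℝ)) := by
  refine ContinuousOn.mul ?_ ?_
  · exact fun x hx => (Real.continuousAt_rpow_const x (r-1)
      (Or.inl (ne_of_gt hx))).continuousWithinAt
  · refine continuousOn_const.div (continuous_const.add continuous_id).continuousOn ?_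
    intro x hx
    have : (0:ℝ) < x := hx
    positivity

lemma integ_ratio {r : ℝ} (hr0 : 0 < r) (hr1 : r < 1) {μ : ℝ} (hμ : 0 < μ) :
    IntegrableOn (fun x : ℝ => x ^ (r-1) * (μ / (μ + x))) (Ioi (0:ℝ)) volume := by
  have hmeas : ∀ s : Set ℝ, s ⊆ Ioi 0 → MeasurableSet s →
      AEStronglyMeasurable (fun x : ℝ => x ^ (r-1) * (μ / (μ + x))) (volume.restrict s) :=
    fun s hs hms => ((ratio_contOn hμ).mono hs).aestronglyMeasurable hms
  rw [show Ioi (0:ℝ) = Ioc 0 1 ∪ Ioi 1 from (Ioc_union_Ioi_eq_Ioi zero_le_one).symm]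
  refine IntegrableOn.union ?_ ?_
  · refine Integrable.mono' (g := fun x : ℝ => x ^ (r-1)) ?_
      (hmeas _ (Ioc_subset_Ioi_self) measurableSet_Ioc) ?_
    · exact (intervalIntegrable_iff_integrableOn_Ioc_of_le zero_le_one).mp
        (intervalIntegral.intervalIntegrable_rpow' (by linarith))
    · rw [ae_restrict_iff' measurableSet_Ioc]
      refine .of_forall fun x hx => ?_
      have hx0 : 0 < x := hx.1
      have h1 : 0 ≤ x ^ (r-1) := (Real.rpow_pos_of_pos hx0 _).le
      have h2 : 0 ≤ μ / (μ + x) := by positivity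
      have h3 : μ / (μ + x) ≤ 1 := by
        rw [div_le_one (by linarith)]; linarith
      rw [Real.norm_eq_abs, abs_of_nonneg (mul_nonneg h1 h2)]
      nlinarith
  · refine Integrable.mono' (g := fun x : ℝ => μ * x ^ (r-2)) ?_
      (hmeas _ (Ioi_subset_Ioi zero_le_one) measurableSet_Ioi) ?_
    · exact (integrableOn_Ioi_rpow_of_lt (by linarith) one_pos).const_mul μ
    · rw [ae_restrict_iff' measurableSet_Ioi]
      refine .of_forall fun x hx => ?_
      have hx1 : (1:ℝ) < x := hx
      have hx0 : (0:ℝ) < x := by linarith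
      have h1 : 0 ≤ x ^ (r-1) := (Real.rpow_pos_of_pos hx0 _).le
      have h2 : 0 ≤ μ / (μ + x) := by positivity
      have h3 : μ / (μ + x) ≤ μ / x :=
        div_le_div_of_nonneg_left hμ.le hx0 (by linarith)
      have h4 : μ * x ^ (r-2) = x ^ (r-1) * (μ / x) := by
        rw [show r - 2 = (r-1) - 1 from by ring, Real.rpow_sub hx0, Real.rpow_one]
        ring
      have hb : x ^ (r-1) * (μ / (μ + x)) ≤ μ * x ^ (r-2) := by
        rw [h4]
        exact mul_le_mul_of_nonneg_left h3 h1
      rw [Real.norm_eq_abs, abs_of_nonneg (mul_nonneg h1 h2)]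
      simpa using hb

lemma Kr_pos {r : ℝ} (hr0 : 0 < r) (hr1 : r < 1) : 0 < Kr r := by
  have hint : IntegrableOn (fun x : ℝ => x ^ (r-1) * (1 / (1 + x))) (Ioi (0:ℝ)) volume := by
    simpa using integ_ratio hr0 hr1 one_pos
  rw [Kr]
  rw [setIntegral_pos_iff_support_of_nonneg_ae ?_ hint]
  · have hsub : Ioi (0:ℝ) ⊆ Function.support (fun x : ℝ => x ^ (r-1) * (1 / (1 + x))) ∩ Ioi 0 := by
      intro x hx
      have hx0 : (0:ℝ) < x := hx
      refine ⟨?_, hx⟩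
      have : 0 < x ^ (r-1) * (1 / (1 + x)) := by
        have := Real.rpow_pos_of_pos hx0 (r-1)
        positivity
      exact ne_of_gt this
    calc (0:ENNReal) < volume (Ioi (0:ℝ)) := by simp [Real.volume_Ioi]
      _ ≤ _ := measure_mono hsub
  · filter_upwards [self_mem_ae_restrict measurableSet_Ioi] with x hx
    have hx0 : (0:ℝ) < x := hx
    have := Real.rpow_pos_of_pos hx0 (r-1)
    positivity

lemma integral_ratio_eq {r : ℝ} {μ : ℝ} (hμ : 0 < μ) :
    ∫ x in Ioi (0:ℝ), x ^ (r-1) * (μ / (μ + x)) = μ ^ r * Kr r := by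
  have h := integral_comp_mul_left_Ioi (fun x : ℝ => x ^ (r-1) * (μ / (μ + x))) 0 hμ
  simp only [mul_zero, smul_eq_mul] at h
  have e : ∫ x in Ioi (0:ℝ), (μ * x) ^ (r-1) * (μ / (μ + μ * x))
      = ∫ x in Ioi (0:ℝ), μ ^ (r-1) * (x ^ (r-1) * (1 / (1 + x))) := by
    refine setIntegral_congr_fun measurableSet_Ioi fun x hx => ?_
    have hx0 : (0:ℝ) < x := hx
    rw [Real.mul_rpow hμ.le hx0.le]
    have h5 : μ + μ * x = μ * (1 + x) := by ring
    have h6 : μ / (μ + μ * x) = 1 / (1 + x) := by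
      rw [h5, div_mul_eq_div_div_swap, div_right_comm, div_self (ne_of_gt hμ)]
    rw [h6]
    ring
  rw [e, integral_const_mul] at h
  have hKr : (∫ x in Ioi (0:ℝ), x ^ (r-1) * (1 / (1 + x))) = Kr r := rfl
  rw [hKr] at h
  have : ∫ x in Ioi (0:ℝ), x ^ (r-1) * (μ / (μ + x)) = μ * (μ ^ (r-1) * Kr r) := by
    rw [h, ← mul_assoc, mul_inv_cancel₀ (ne_of_gt hμ), one_mul]
  rw [this, ← mul_assoc]
  congr 1
  rw [show r = 1 + (r-1) from by ring, Real.rpow_add hμ, Real.rpow_one]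
  ring_nf

lemma half_pos_c : (0:ℂ) < 1/2 := by norm_num [Complex.lt_def]

lemma coe_nonneg_c {t : ℝ} (ht : 0 ≤ t) : (0:ℂ) ≤ (t:ℂ) := by exact_mod_cast ht

lemma per_matrix {r : ℝ} (hr0 : 0 < r) (hr1 : r < 1) {B : Matrix n n ℂ} (hB : B.PosDef)
    (v : n → ℂ) :
    IntegrableOn (fun t : ℝ => t ^ (r-1) *
        (star v ⬝ᵥ (cfc (fun x : ℝ => x / (x + t)) B *ᵥ v)).re) (Ioi (0:ℝ)) volume ∧
      ∫ t in Ioi (0:ℝ), t ^ (r-1) * (star v ⬝ᵥ (cfc (fun x : ℝ => x / (x + t)) B *ᵥ v)).re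
        = Kr r * (star v ⬝ᵥ (mpow B r *ᵥ v)).re := by
  have hμ := hB.eigenvalues_pos
  set μ := hB.1.eigenvalues with hμdef
  set c := fun i => Complex.normSq ((star (hB.1.eigenvectorUnitary : Matrix n n ℂ) *ᵥ v) i)
    with hcdef
  have hcn : ∀ i, 0 ≤ c i := fun i => Complex.normSq_nonneg _
  have hfun : ∀ t : ℝ, t ^ (r-1) * (star v ⬝ᵥ (cfc (fun x : ℝ => x / (x + t)) B *ᵥ v)).re
      = ∑ i, (t ^ (r-1) * (μ i / (μ i + t))) * c i := by
    intro t
    rw [qf_cfc hB.1 _ v, Complex.ofReal_re, Finset.mul_sum]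
    exact Finset.sum_congr rfl fun i _ => by ring
  have hint : ∀ i : n, IntegrableOn
      (fun t : ℝ => (t ^ (r-1) * (μ i / (μ i + t))) * c i) (Ioi (0:ℝ)) volume :=
    fun i => (integ_ratio hr0 hr1 (hμ i)).mul_const (c i)
  constructor
  · have := MeasureTheory.integrable_finset_sum (μ := volume.restrict (Ioi (0:ℝ)))
      (Finset.univ) (fun i _ => hint i)
    exact this.congr (Filter.Eventually.of_forall fun t => (hfun t).symm)
  · rw [MeasureTheory.setIntegral_congr_fun measurableSet_Ioi (fun t _ => hfun t),
      MeasureTheory.integral_finset_sum _ (fun i _ => hint i)]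
    have hqf : (star v ⬝ᵥ (mpow B r *ᵥ v)).re = ∑ i, (μ i) ^ r * c i := by
      rw [show mpow B r = cfc (fun x : ℝ => x ^ r) B from rfl, qf_cfc hB.1 _ v,
        Complex.ofReal_re]
    rw [hqf, Finset.mul_sum]
    refine Finset.sum_congr rfl fun i _ => ?_
    rw [MeasureTheory.integral_mul_const, integral_ratio_eq (hμ i)]
    ring

lemma re_qf_lin (M M₁ M₂ : Matrix n n ℂ) (v : n → ℂ) :
    (star v ⬝ᵥ ((M - (1/2:ℂ) • (M₁ + M₂)) *ᵥ v)).re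
      = (star v ⬝ᵥ (M *ᵥ v)).re
        - (1/2) * ((star v ⬝ᵥ (M₁ *ᵥ v)).re + (star v ⬝ᵥ (M₂ *ᵥ v)).re) := by
  rw [Matrix.sub_mulVec, dotProduct_sub, smul_mulVec, dotProduct_smul,
    Matrix.add_mulVec, dotProduct_add, Complex.sub_re, smul_eq_mul,
    show (1/2 : ℂ) = ((1/2 : ℝ) : ℂ) from by norm_num, Complex.re_ofReal_mul, Complex.add_re]

lemma pointwise_psd {B₁ B₂ : Matrix n n ℂ} (h1 : B₁.PosDef) (h2 : B₂.PosDef)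
    {t : ℝ} (ht : 0 < t) :
    (cfc (fun x : ℝ => x / (x + t)) ((1/2:ℂ) • (B₁ + B₂))
      - (1/2:ℂ) • (cfc (fun x : ℝ => x / (x + t)) B₁ + cfc (fun x : ℝ => x / (x + t)) B₂)).PosSemidef := by
  have h0 : ((1/2:ℂ) • (B₁ + B₂)).PosDef := pd_smul_c (h1.add h2) half_pos_c
  have ht1 : ((t:ℂ) • (1 : Matrix n n ℂ)).PosSemidef :=
    psd_smul_c Matrix.PosSemidef.one (coe_nonneg_c ht.le)
  have hC1 : (B₁ + (t:ℂ) • 1).PosDef := h1.add_posSemidef ht1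
  have hC2 : (B₂ + (t:ℂ) • 1).PosDef := h2.add_posSemidef ht1
  have hB0t : (1/2:ℂ) • (B₁ + B₂) + (t:ℂ) • 1
      = (1/2:ℂ) • ((B₁ + (t:ℂ) • 1) + (B₂ + (t:ℂ) • 1)) := by
    module
  rw [cfc_ratio t ht h0, cfc_ratio t ht h1, cfc_ratio t ht h2, hB0t]
  have hconv := inv_convex hC1 hC2
  have heq : (1 : Matrix n n ℂ) - (t:ℂ) • ((1/2:ℂ) • ((B₁ + (t:ℂ) • 1) + (B₂ + (t:ℂ) • 1)))⁻¹
      - (1/2:ℂ) • ((1 - (t:ℂ) • (B₁ + (t:ℂ) • 1)⁻¹) + (1 - (t:ℂ) • (B₂ + (t:ℂ) • 1)⁻¹))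
      = (t:ℂ) • ((1/2:ℂ) • ((B₁ + (t:ℂ) • 1)⁻¹ + (B₂ + (t:ℂ) • 1)⁻¹)
          - ((1/2:ℂ) • ((B₁ + (t:ℂ) • 1) + (B₂ + (t:ℂ) • 1)))⁻¹) := by
    module
  rw [heq]
  exact psd_smul_c hconv (coe_nonneg_c ht.le)

lemma mpow_concave {r : ℝ} (hr0 : 0 ≤ r) (hr1 : r ≤ 1) {B₁ B₂ : Matrix n n ℂ}
    (h1 : B₁.PosDef) (h2 : B₂.PosDef) :
    (mpow ((1/2:ℂ) • (B₁ + B₂)) r - (1/2:ℂ) • (mpow B₁ r + mpow B₂ r)).PosSemidef := by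
  have h0 : ((1/2:ℂ) • (B₁ + B₂)).PosDef := pd_smul_c (h1.add h2) half_pos_c
  rcases eq_or_lt_of_le hr0 with h | hr0'
  · rw [← h, mpow_zero h0, mpow_zero h1, mpow_zero h2, half_smul_one_add_one, sub_self]
    exact Matrix.PosSemidef.zero
  rcases eq_or_lt_of_le hr1 with h | hr1'
  · rw [h, mpow_one h0, mpow_one h1, mpow_one h2, sub_self]
    exact Matrix.PosSemidef.zero
  have hherm : (mpow ((1/2:ℂ) • (B₁ + B₂)) r
      - (1/2:ℂ) • (mpow B₁ r + mpow B₂ r)).IsHermitian := by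
    refine (mpow_herm h0.1 r).sub ?_
    have hs : ((mpow B₁ r) + (mpow B₂ r)).IsHermitian := (mpow_herm h1.1 r).add (mpow_herm h2.1 r)
    unfold Matrix.IsHermitian at *
    rw [conjTranspose_smul, hs, show star (1/2:ℂ) = 1/2 from by
      rw [RCLike.star_def, map_div₀, _root_.map_one, map_ofNat]]
  refine posSemidef_of_re hherm fun v => ?_
  rw [re_qf_lin]
  obtain ⟨i₀, e₀⟩ := per_matrix hr0' hr1' h0 v
  obtain ⟨i₁, e₁⟩ := per_matrix hr0' hr1' h1 v
  obtain ⟨i₂, e₂⟩ := per_matrix hr0' hr1' h2 v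
  set g₀ := fun t : ℝ => t ^ (r-1) *
    (star v ⬝ᵥ (cfc (fun x : ℝ => x / (x + t)) ((1/2:ℂ) • (B₁ + B₂)) *ᵥ v)).re with hg0
  set g₁ := fun t : ℝ => t ^ (r-1) *
    (star v ⬝ᵥ (cfc (fun x : ℝ => x / (x + t)) B₁ *ᵥ v)).re with hg1
  set g₂ := fun t : ℝ => t ^ (r-1) *
    (star v ⬝ᵥ (cfc (fun x : ℝ => x / (x + t)) B₂ *ᵥ v)).re with hg2
  have key : 0 ≤ ∫ t in Ioi (0:ℝ), (g₀ t - (1/2) * (g₁ t + g₂ t)) := by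
    refine MeasureTheory.setIntegral_nonneg measurableSet_Ioi fun t htpos => ?_
    have hpw := (pointwise_psd h1 h2 (t := t) htpos).re_dotProduct_nonneg v
    simp only [RCLike.re_to_complex] at hpw
    rw [re_qf_lin] at hpw
    have hfac : g₀ t - (1/2) * (g₁ t + g₂ t)
        = t ^ (r-1) * ((star v ⬝ᵥ (cfc (fun x : ℝ => x / (x + t)) ((1/2:ℂ) • (B₁ + B₂)) *ᵥ v)).re
          - (1/2) * ((star v ⬝ᵥ (cfc (fun x : ℝ => x / (x + t)) B₁ *ᵥ v)).re
            + (star v ⬝ᵥ (cfc (fun x : ℝ => x / (x + t)) B₂ *ᵥ v)).re)) := by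
      rw [hg0, hg1, hg2]; ring
    rw [hfac]
    exact mul_nonneg (Real.rpow_pos_of_pos htpos _).le hpw
  have hsplit : ∫ t in Ioi (0:ℝ), (g₀ t - (1/2) * (g₁ t + g₂ t))
      = (∫ t in Ioi (0:ℝ), g₀ t) - (1/2) * ((∫ t in Ioi (0:ℝ), g₁ t) + (∫ t in Ioi (0:ℝ), g₂ t)) := by
    have hI2 : MeasureTheory.Integrable (fun t : ℝ => (1/2) * (g₁ t + g₂ t))
        (volume.restrict (Ioi (0:ℝ))) := by
      have := (i₁.add i₂).const_mul (1/2 : ℝ)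
      simpa using this
    rw [MeasureTheory.integral_sub i₀ hI2,
      MeasureTheory.integral_const_mul (1/2 : ℝ) (fun t => g₁ t + g₂ t),
      MeasureTheory.integral_add i₁ i₂]
  rw [hsplit, e₀, e₁, e₂] at key
  have hKr := Kr_pos hr0' hr1'
  have key2 : 0 ≤ Kr r * ((star v ⬝ᵥ (mpow ((1/2:ℂ) • (B₁ + B₂)) r *ᵥ v)).re
      - (1/2) * ((star v ⬝ᵥ (mpow B₁ r *ᵥ v)).re + (star v ⬝ᵥ (mpow B₂ r *ᵥ v)).re)) := by
    nlinarith [key]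
  exact (mul_nonneg_iff_of_pos_left hKr).mp key2

end scalarint

end helpers

theorem stmt10 {m l : Type*} [Fintype m] [DecidableEq m] [Fintype l] [DecidableEq l]
    (q : ℝ) (hq₁ : -1 ≤ q) (hq₂ : q ≤ 0)
    (Ψ : Matrix m m ℂ →ₗ[ℂ] Matrix l l ℂ)
    (hΨpos : ∀ B : Matrix m m ℂ, B.PosSemidef → (Ψ B).PosSemidef)
    (hΨspos : ∀ B : Matrix m m ℂ, B.PosDef → (Ψ B).PosDef)
    (B₁ B₂ : Matrix m m ℂ) (hB₁ : B₁.PosDef) (hB₂ : B₂.PosDef) :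
    ((1 / 2 : ℂ) • ((Ψ (mpow B₁ (-q)))⁻¹ + (Ψ (mpow B₂ (-q)))⁻¹) -
      (Ψ (mpow ((1 / 2 : ℂ) • (B₁ + B₂)) (-q)))⁻¹).PosSemidef := by
  set r := -q with hrdef
  have hr0 : 0 ≤ r := by rw [hrdef]; linarith
  have hr1 : r ≤ 1 := by rw [hrdef]; linarith
  have h0 : ((1/2:ℂ) • (B₁ + B₂)).PosDef := pd_smul_c (hB₁.add hB₂) half_pos_c
  have hP₀ : (Ψ (mpow ((1/2:ℂ) • (B₁ + B₂)) r)).PosDef := hΨspos _ (mpow_posDef h0 r)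
  have hP₁ : (Ψ (mpow B₁ r)).PosDef := hΨspos _ (mpow_posDef hB₁ r)
  have hP₂ : (Ψ (mpow B₂ r)).PosDef := hΨspos _ (mpow_posDef hB₂ r)
  have hQ : ((1/2:ℂ) • (Ψ (mpow B₁ r) + Ψ (mpow B₂ r))).PosDef :=
    pd_smul_c (hP₁.add hP₂) half_pos_c
  have hS3 : (Ψ (mpow ((1/2:ℂ) • (B₁ + B₂)) r)
      - (1/2:ℂ) • (Ψ (mpow B₁ r) + Ψ (mpow B₂ r))).PosSemidef := by
    have := hΨpos _ (mpow_concave hr0 hr1 hB₁ hB₂)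
    rwa [map_sub, map_smul, map_add] at this
  have hS4 := inv_antitone hQ hP₀ hS3
  have hS5 := inv_convex hP₁ hP₂
  have := hS5.add hS4
  rwa [sub_add_sub_cancel] at this
end

section
/- Let n = 2, E the 2×2 orthogonal projection with all entries 1/2, and Φ(X) = EXE. For every p, s > 0 the function A ↦ Tr Φ(A^{−p})^{−s/p} (trace over the range of E) is not convex on ℙ_2: with A₁ = diag(1,t), A₂ = diag(t,1), one has Tr Φ(((A₁+A₂)/2)^{−p})^{−s/p} = ((1+t)/2)^s > ((1+t^{−p})/2)^{−s/p} = (Tr Φ(A₁^{−p})^{−s/p} + Tr Φ(A₂^{−p})^{−s/p})/2 for every t > 0 with t ≠ 1. -/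
open scoped ComplexOrder Matrix

section diag
variable {n : Type*} [Fintype n] [DecidableEq n]

lemma spectrum_real_diagonal (d : n → ℝ) :
    spectrum ℝ (Matrix.diagonal fun i => (d i : ℂ)) = Set.range d := by
  ext x
  rw [← spectrum.algebraMap_mem_iff ℂ, spectrum_diagonal]
  constructor
  · rintro ⟨i, hi⟩
    exact ⟨i, by simpa using hi⟩
  · rintro ⟨i, rfl⟩
    exact ⟨i, by simp⟩

lemma isSelfAdjoint_real_diagonal (d : n → ℝ) :
    IsSelfAdjoint (Matrix.diagonal fun i => (d i : ℂ)) := by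
  rw [IsSelfAdjoint, Matrix.star_eq_conjTranspose, Matrix.diagonal_conjTranspose]
  congr 1
  funext i
  simp [Pi.star_def, Complex.conj_ofReal]

lemma cfc_real_diagonal (d : n → ℝ) (f : ℝ → ℝ)
    (hf : ContinuousOn f (Set.range d)) :
    cfc f (Matrix.diagonal fun i => (d i : ℂ)) = Matrix.diagonal fun i => (f (d i) : ℂ) := by
  set A : Matrix n n ℂ := Matrix.diagonal fun i => (d i : ℂ) with hA
  have hsa : IsSelfAdjoint A := isSelfAdjoint_real_diagonal d
  have hspec : spectrum ℝ A = Set.range d := spectrum_real_diagonal d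
  have hmem : ∀ i, d i ∈ spectrum ℝ A := fun i => hspec ▸ ⟨i, rfl⟩
  have hf' : ContinuousOn f (spectrum ℝ A) := hspec ▸ hf
  let φ : C(spectrum ℝ A, ℝ) →⋆ₐ[ℝ] Matrix n n ℂ :=
    { toFun := fun g => Matrix.diagonal fun i => ((g ⟨d i, hmem i⟩ : ℝ) : ℂ)
      map_one' := by simp
      map_mul' := fun g h => by
        rw [Matrix.diagonal_mul_diagonal]
        exact congrArg _ (funext fun i => by simp)
      map_zero' := by simp
      map_add' := fun g h => by
        rw [Matrix.diagonal_add]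
        exact congrArg _ (funext fun i => by simp)
      commutes' := fun r => by
        rw [Matrix.algebraMap_eq_diagonal]
        exact congrArg _ (funext fun i => by simp [Pi.algebraMap_apply])
      map_star' := fun g => by
        rw [Matrix.star_eq_conjTranspose, Matrix.diagonal_conjTranspose]
        exact congrArg _ (funext fun i => by simp [Pi.star_def, Complex.conj_ofReal]) }
  have hφc : Continuous φ := by
    have hφ : ⇑φ = fun g : C(spectrum ℝ A, ℝ) =>
        Matrix.diagonal fun i => ((g ⟨d i, hmem i⟩ : ℝ) : ℂ) := rfl
    rw [hφ]
    apply continuous_matrix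
    intro i j
    simp only [Matrix.diagonal_apply]
    split_ifs with h
    · exact Complex.continuous_ofReal.comp (continuous_eval_const _)
    · exact continuous_const
  have hφid : φ (ContinuousMap.restrict (spectrum ℝ A) (ContinuousMap.id ℝ)) = A := by
    simp only [φ, StarAlgHom.coe_mk']
    rfl
  rw [cfc_apply f A hsa hf', cfcHom_eq_of_continuous_of_map_id hsa φ hφc hφid]
  rfl

end diag

lemma EdE (a b : ℂ) :
    (!![1/2,1/2;1/2,1/2] : Matrix (Fin 2) (Fin 2) ℂ) * Matrix.diagonal ![a,b] *
      !![1/2,1/2;1/2,1/2] = ((a+b)/2) • !![1/2,1/2;1/2,1/2] := by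
  ext i j
  fin_cases i <;> fin_cases j <;>
    simp [Matrix.mul_apply, Fin.sum_univ_two, Matrix.diagonal_apply, Matrix.vecHead,
      Matrix.vecTail, Matrix.vecMul, dotProduct] <;> ring

/-- The counterexample of Remark 4.6: with `E` the rank-one projection with all entries `1/2`
and `Φ(X) = EXE`, for all `p, s > 0` the function `A ↦ Tr Φ(A⁻ᵖ)^{-s/p}` fails to be convex:
at `A₁ = diag(1,t)`, `A₂ = diag(t,1)`, `Φ(((A₁+A₂)/2)⁻ᵖ)` and `Φ(Aᵢ⁻ᵖ)` are the indicated
scalar multiples of `E`, and the value at the midpoint, `((1+t)/2)^s`, strictly exceeds the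
average of the values, `((1+t⁻ᵖ)/2)^{-s/p}`, whenever `t ≠ 1`. -/
theorem stmt17 (p s t : ℝ) (hp : 0 < p) (hs : 0 < s) (ht : 0 < t) (ht1 : t ≠ 1) :
    let E : Matrix (Fin 2) (Fin 2) ℂ := !![1/2, 1/2; 1/2, 1/2]
    let A₁ : Matrix (Fin 2) (Fin 2) ℂ := Matrix.diagonal ![1, (t : ℂ)]
    let A₂ : Matrix (Fin 2) (Fin 2) ℂ := Matrix.diagonal ![(t : ℂ), 1]
    E * mpow ((1 / 2 : ℂ) • (A₁ + A₂)) (-p) * E = ((((1 + t) / 2) ^ (-p) : ℝ) : ℂ) • E ∧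
    E * mpow A₁ (-p) * E = ((((1 + t ^ (-p)) / 2 : ℝ)) : ℂ) • E ∧
    E * mpow A₂ (-p) * E = ((((1 + t ^ (-p)) / 2 : ℝ)) : ℂ) • E ∧
    (((1 + t) / 2) ^ (-p)) ^ (-s / p) = ((1 + t) / 2) ^ s ∧
    ((1 + t ^ (-p)) / 2) ^ (-s / p) < ((1 + t) / 2) ^ s := by
  intro E A₁ A₂
  have hm : (0:ℝ) < (1 + t) / 2 := by linarith
  have hcont : ∀ S : Set ℝ, (∀ x ∈ S, 0 < x) →
      ContinuousOn (fun x : ℝ => x ^ (-p)) S := fun S hS x hx =>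
    (Real.continuousAt_rpow_const x (-p) (Or.inl (hS x hx).ne')).continuousWithinAt
  -- conjunct 1
  have h1 : E * mpow ((1 / 2 : ℂ) • (A₁ + A₂)) (-p) * E
      = ((((1 + t) / 2) ^ (-p) : ℝ) : ℂ) • E := by
    have hmid : (1 / 2 : ℂ) • (A₁ + A₂)
        = Matrix.diagonal fun _ : Fin 2 => ((((1 + t) / 2 : ℝ)) : ℂ) := by
      ext i j
      fin_cases i <;> fin_cases j <;> simp [A₁, A₂, Matrix.diagonal] <;> push_cast <;> ring
    rw [hmid, mpow, cfc_real_diagonal (fun _ => (1+t)/2) _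
      (hcont _ (by rintro x ⟨i, rfl⟩; exact hm))]
    have : (Matrix.diagonal fun _ : Fin 2 => ((((1+t)/2) ^ (-p) : ℝ) : ℂ))
        = Matrix.diagonal ![((((1+t)/2) ^ (-p) : ℝ) : ℂ), ((((1+t)/2) ^ (-p) : ℝ) : ℂ)] :=
      congrArg _ (funext fun i => by fin_cases i <;> rfl)
    rw [this, EdE]
    congr 1
    push_cast
    ring
  -- conjuncts 2,3
  have hr2 : ∀ x ∈ Set.range (![1, t] : Fin 2 → ℝ), 0 < x := by
    rintro x ⟨i, rfl⟩
    fin_cases i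
    · exact one_pos
    · exact ht
  have hr3 : ∀ x ∈ Set.range (![t, 1] : Fin 2 → ℝ), 0 < x := by
    rintro x ⟨i, rfl⟩
    fin_cases i
    · exact ht
    · exact one_pos
  have h2 : E * mpow A₁ (-p) * E = ((((1 + t ^ (-p)) / 2 : ℝ)) : ℂ) • E := by
    have hA1 : A₁ = Matrix.diagonal fun i => ((![1, t] i : ℝ) : ℂ) := by
      show Matrix.diagonal ![1, (t : ℂ)] = _
      exact congrArg _ (funext fun i => by fin_cases i <;> simp)
    rw [hA1, mpow, cfc_real_diagonal ![1, t] _ (hcont _ hr2)]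
    have : (Matrix.diagonal fun i => ((((![1, t] i)) ^ (-p) : ℝ) : ℂ))
        = Matrix.diagonal ![(((1:ℝ) ^ (-p) : ℝ) : ℂ), ((t ^ (-p) : ℝ) : ℂ)] :=
      congrArg _ (funext fun i => by fin_cases i <;> simp)
    rw [this, EdE]
    congr 1
    rw [Real.one_rpow]
    push_cast
    ring
  have h3 : E * mpow A₂ (-p) * E = ((((1 + t ^ (-p)) / 2 : ℝ)) : ℂ) • E := by
    have hA2 : A₂ = Matrix.diagonal fun i => ((![t, 1] i : ℝ) : ℂ) := by
      show Matrix.diagonal ![(t : ℂ), 1] = _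
      exact congrArg _ (funext fun i => by fin_cases i <;> simp)
    rw [hA2, mpow, cfc_real_diagonal ![t, 1] _ (hcont _ hr3)]
    have : (Matrix.diagonal fun i => ((((![t, 1] i)) ^ (-p) : ℝ) : ℂ))
        = Matrix.diagonal ![((t ^ (-p) : ℝ) : ℂ), (((1:ℝ) ^ (-p) : ℝ) : ℂ)] :=
      congrArg _ (funext fun i => by fin_cases i <;> simp)
    rw [this, EdE]
    congr 1
    rw [Real.one_rpow]
    push_cast
    ring
  -- conjunct 4
  have h4 : (((1 + t) / 2) ^ (-p)) ^ (-s / p) = ((1 + t) / 2) ^ s := by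
    rw [← Real.rpow_mul hm.le]
    congr 1
    field_simp
  -- conjunct 5
  have h5 : ((1 + t ^ (-p)) / 2) ^ (-s / p) < ((1 + t) / 2) ^ s := by
    have hst : Real.sqrt t < (1 + t) / 2 := by
      have h1 : Real.sqrt t ≠ 1 := by
        intro h
        apply ht1
        have := Real.sq_sqrt ht.le
        rw [h] at this; simpa using this.symm
      have h2 : 0 < (Real.sqrt t - 1) ^ 2 := by
        have := sub_ne_zero.2 h1
        positivity
      nlinarith [Real.sq_sqrt ht.le, Real.sqrt_nonneg t]
    have hkey : ((1 + t) / 2) ^ (-p) < (1 + t ^ (-p)) / 2 := by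
      have hs1 : ((1 + t) / 2) ^ (-p) < (Real.sqrt t) ^ (-p) :=
        Real.rpow_lt_rpow_of_neg (Real.sqrt_pos.2 ht) hst (neg_neg_iff_pos.2 hp)
      have hs2 : (Real.sqrt t) ^ (-p) = Real.sqrt (t ^ (-p)) := by
        rw [Real.sqrt_eq_rpow, Real.sqrt_eq_rpow,
          ← Real.rpow_mul ht.le, ← Real.rpow_mul ht.le]
        congr 1
        ring
      have hs3 : Real.sqrt (t ^ (-p)) ≤ (1 + t ^ (-p)) / 2 := by
        nlinarith [sq_nonneg (Real.sqrt (t ^ (-p)) - 1),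
          Real.sq_sqrt (Real.rpow_nonneg ht.le (-p)), Real.sqrt_nonneg (t ^ (-p))]
      calc ((1 + t) / 2) ^ (-p) < (Real.sqrt t) ^ (-p) := hs1
        _ = Real.sqrt (t ^ (-p)) := hs2
        _ ≤ (1 + t ^ (-p)) / 2 := hs3
    calc ((1 + t ^ (-p)) / 2) ^ (-s / p)
        < (((1 + t) / 2) ^ (-p)) ^ (-s / p) :=
          Real.rpow_lt_rpow_of_neg (Real.rpow_pos_of_pos hm (-p)) hkey
            (by rw [neg_div]; exact neg_neg_iff_pos.2 (div_pos hs hp))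
      _ = ((1 + t) / 2) ^ s := h4
  exact ⟨h1, h2, h3, h4, h5⟩
end

section
/- Let 0 < s ≤ 1/(1+r) with r > 0, and α > 0. Define f on (0,∞) by f(x) = x^s − α x for 0 < x ≤ (s/α)^{1/(1−s)} and f(x) = (1−s)(s/α)^{s/(1−s)} for x ≥ (s/α)^{1/(1−s)}. Then f is non-decreasing and concave on (0,∞), and x ↦ f(x^{1+r}) is concave on (0,∞). -/
open Set

theorem stmt19 (r s α : ℝ) (hr : 0 < r) (hs : 0 < s) (hs' : s ≤ 1 / (1 + r))
    (hα : 0 < α) (f : ℝ → ℝ)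
    (hf₁ : ∀ x : ℝ, 0 < x → x ≤ (s / α) ^ (1 / (1 - s)) → f x = x ^ s - α * x)
    (hf₂ : ∀ x : ℝ, x ≥ (s / α) ^ (1 / (1 - s)) → f x = (1 - s) * (s / α) ^ (s / (1 - s))) :
    MonotoneOn f (Ioi (0 : ℝ)) ∧
    ConcaveOn ℝ (Ioi (0 : ℝ)) f ∧
    ConcaveOn ℝ (Ioi (0 : ℝ)) (fun x => f (x ^ (1 + r))) := by
  have hr1 : (0:ℝ) < 1 + r := by linarith
  have hs1 : s < 1 := lt_of_le_of_lt hs' (by rw [div_lt_one hr1]; linarith)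
  have h1s : (0:ℝ) < 1 - s := by linarith
  have hsα : 0 < s / α := div_pos hs hα
  set c : ℝ := (s / α) ^ (1 / (1 - s)) with hc
  set K : ℝ := (s / α) ^ (s / (1 - s)) with hK
  have hc0 : 0 < c := Real.rpow_pos_of_pos hsα _
  have hK0 : 0 < K := Real.rpow_pos_of_pos hsα _
  -- c ^ (s - 1) = α / s
  have hcs : c ^ (s - 1) = α / s := by
    rw [hc, ← Real.rpow_mul hsα.le]
    have : 1 / (1 - s) * (s - 1) = -1 := by field_simp; ring
    rw [this, Real.rpow_neg_one, inv_div]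
  have hscs : s * c ^ (s - 1) - α = 0 := by
    rw [hcs]; field_simp; ring
  -- value compatibility at c
  have hfc : f c = (1 - s) * K := hf₂ c le_rfl
  -- the candidate derivative
  set D : ℝ → ℝ := fun x => if x ≤ c then s * x ^ (s - 1) - α else 0 with hD
  -- auxiliary : derivative of g at positive points
  have hg : ∀ x : ℝ, 0 < x → HasDerivAt (fun y => y ^ s - α * y) (s * x ^ (s - 1) - α) x := by
    intro x hx
    have h1 : HasDerivAt (fun y : ℝ => y ^ s) (s * x ^ (s - 1)) x :=
      Real.hasDerivAt_rpow_const (Or.inl hx.ne')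
    have h2 : HasDerivAt (fun y : ℝ => α * y) α x := by
      simpa using (hasDerivAt_id x).const_mul α
    exact h1.sub h2
  -- f has derivative D x at every x > 0
  have hDf : ∀ x ∈ Ioi (0:ℝ), HasDerivAt f (D x) x := by
    intro x hx
    rw [mem_Ioi] at hx
    rcases lt_trichotomy x c with hlt | heq | hgt
    · have hmem : Ioo (0:ℝ) c ∈ nhds x := Ioo_mem_nhds hx hlt
      have heqf : f =ᶠ[nhds x] fun y => y ^ s - α * y :=
        Filter.eventuallyEq_of_mem hmem fun y hy => hf₁ y hy.1 hy.2.le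
      have : HasDerivAt f (s * x ^ (s - 1) - α) x :=
        (hg x hx).congr_of_eventuallyEq heqf
      simpa [hD, hlt.le] using this
    · rw [heq]
      have hDc : D c = 0 := by simp [hD, hscs]
      rw [hDc]
      have hleft : HasDerivWithinAt f 0 (Iic c) c := by
        have hgc : HasDerivWithinAt (fun y => y ^ s - α * y) 0 (Iic c) c := by
          have := (hg c hc0).hasDerivWithinAt (s := Iic c)
          rwa [hscs] at this
        refine hgc.congr_of_eventuallyEq ?_ (hf₁ c hc0 le_rfl)
        have hmem : Ioc (0:ℝ) c ∈ nhdsWithin c (Iic c) := by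
          rw [← Ioi_inter_Iic]
          exact Filter.inter_mem (mem_nhdsWithin_of_mem_nhds (Ioi_mem_nhds hc0)) self_mem_nhdsWithin
        exact Filter.eventuallyEq_of_mem hmem fun y hy => hf₁ y hy.1 hy.2
      have hright : HasDerivWithinAt f 0 (Ici c) c := by
        have hconst : HasDerivWithinAt (fun _ : ℝ => (1 - s) * K) 0 (Ici c) c :=
          (hasDerivAt_const _ _).hasDerivWithinAt
        refine hconst.congr_of_eventuallyEq ?_ hfc
        exact Filter.eventuallyEq_of_mem self_mem_nhdsWithin fun y hy => hf₂ y hy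
      have := hleft.union hright
      rwa [Iic_union_Ici, hasDerivWithinAt_univ] at this
    · have hmem : Ioi c ∈ nhds x := Ioi_mem_nhds hgt
      have heqf : f =ᶠ[nhds x] fun _ => (1 - s) * K :=
        Filter.eventuallyEq_of_mem hmem fun y hy => hf₂ y (le_of_lt hy)
      have : HasDerivAt f 0 x := (hasDerivAt_const x _).congr_of_eventuallyEq heqf
      simpa [hD, not_le.mpr hgt] using this
  -- nonnegativity of D
  have hDnonneg : ∀ x ∈ Ioi (0:ℝ), 0 ≤ D x := by
    intro x hx
    rw [mem_Ioi] at hx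
    by_cases hxc : x ≤ c
    · have h1 : c ^ (s - 1) ≤ x ^ (s - 1) :=
        Real.rpow_le_rpow_of_nonpos hx hxc (by linarith)
      rw [hcs] at h1
      have : α ≤ s * x ^ (s - 1) := by
        calc α = s * (α / s) := by field_simp
        _ ≤ s * x ^ (s - 1) := by nlinarith
      simp only [hD, if_pos hxc]
      linarith
    · simp [hD, hxc]
  -- antitonicity of D
  have hDanti : AntitoneOn D (Ioi (0:ℝ)) := by
    intro x hx y hy hxy
    rw [mem_Ioi] at hx hy
    by_cases hyc : y ≤ c
    · have hxc : x ≤ c := hxy.trans hyc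
      have h1 : y ^ (s - 1) ≤ x ^ (s - 1) :=
        Real.rpow_le_rpow_of_nonpos hx hxy (by linarith)
      simp only [hD, if_pos hxc, if_pos hyc]
      nlinarith
    · have : D y = 0 := by simp [hD, hyc]
      rw [this]
      exact hDnonneg x hx
  have hfd : DifferentiableOn ℝ f (Ioi 0) :=
    fun x hx => (hDf x hx).differentiableAt.differentiableWithinAt
  have hfcon : ContinuousOn f (Ioi 0) :=
    fun x hx => (hDf x hx).differentiableAt.continuousAt.continuousWithinAt
  have hderiv : ∀ x ∈ Ioi (0:ℝ), deriv f x = D x := fun x hx => (hDf x hx).deriv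
  refine ⟨?_, ?_, ?_⟩
  · refine monotoneOn_of_deriv_nonneg (convex_Ioi 0) hfcon (by rwa [interior_Ioi]) ?_
    intro x hx
    rw [interior_Ioi] at hx
    rw [hderiv x hx]
    exact hDnonneg x hx
  · refine AntitoneOn.concaveOn_of_deriv (convex_Ioi 0) hfcon (by rwa [interior_Ioi]) ?_
    intro x hx y hy hxy
    rw [interior_Ioi] at hx hy
    rw [hderiv x hx, hderiv y hy]
    exact hDanti hx hy hxy
  · -- the composed function
    set h : ℝ → ℝ := fun x => f (x ^ (1 + r)) with hh
    set E : ℝ → ℝ := fun x => D (x ^ (1 + r)) * ((1 + r) * x ^ r) with hE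
    have hEf : ∀ x ∈ Ioi (0:ℝ), HasDerivAt h (E x) x := by
      intro x hx
      rw [mem_Ioi] at hx
      have hxp : 0 < x ^ (1 + r) := Real.rpow_pos_of_pos hx _
      have hinner : HasDerivAt (fun y : ℝ => y ^ (1 + r)) ((1 + r) * x ^ r) x := by
        have := Real.hasDerivAt_rpow_const (p := 1 + r) (Or.inl hx.ne')
        simpa using this
      exact (hDf _ (mem_Ioi.mpr hxp)).comp x hinner
    have hq : (1 + r) * s - 1 ≤ 0 := by
      have := (le_div_iff₀ hr1).mp hs'
      linarith [mul_comm s (1 + r)]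
    -- rewrite E on the region where the formula applies
    have hEform : ∀ x : ℝ, 0 < x → x ^ (1 + r) ≤ c →
        E x = (1 + r) * (s * x ^ ((1 + r) * s - 1) - α * x ^ r) := by
      intro x hx hxc
      have h1 : (x ^ (1 + r)) ^ (s - 1) = x ^ ((1 + r) * (s - 1)) :=
        (Real.rpow_mul hx.le _ _).symm
      simp only [hE, hD, if_pos hxc, h1]
      have h2 : x ^ ((1 + r) * (s - 1)) * x ^ r = x ^ ((1 + r) * s - 1) := by
        rw [← Real.rpow_add hx]
        ring_nf
      nlinarith [h2]
    have hEnonneg : ∀ x ∈ Ioi (0:ℝ), 0 ≤ E x := by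
      intro x hx
      rw [mem_Ioi] at hx
      have hxp : 0 < x ^ (1 + r) := Real.rpow_pos_of_pos hx _
      have h1 : 0 ≤ D (x ^ (1 + r)) := hDnonneg _ (mem_Ioi.mpr hxp)
      have h2 : 0 < (1 + r) * x ^ r := mul_pos hr1 (Real.rpow_pos_of_pos hx _)
      exact mul_nonneg h1 h2.le
    have hEanti : AntitoneOn E (Ioi (0:ℝ)) := by
      intro x hx y hy hxy
      rw [mem_Ioi] at hx hy
      by_cases hyc : y ^ (1 + r) ≤ c
      · have hxc : x ^ (1 + r) ≤ c :=
          le_trans (Real.rpow_le_rpow hx.le hxy hr1.le) hyc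
        rw [hEform x hx hxc, hEform y hy hyc]
        have h1 : y ^ ((1 + r) * s - 1) ≤ x ^ ((1 + r) * s - 1) :=
          Real.rpow_le_rpow_of_nonpos hx hxy hq
        have h2 : x ^ r ≤ y ^ r := Real.rpow_le_rpow hx.le hxy hr.le
        have h3 : s * y ^ ((1 + r) * s - 1) ≤ s * x ^ ((1 + r) * s - 1) :=
          mul_le_mul_of_nonneg_left h1 hs.le
        have h4 : α * x ^ r ≤ α * y ^ r := mul_le_mul_of_nonneg_left h2 hα.le
        exact mul_le_mul_of_nonneg_left (by linarith) hr1.le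
      · have : D (y ^ (1 + r)) = 0 := by simp [hD, hyc]
        have hEy : E y = 0 := by simp [hE, this]
        rw [hEy]
        exact hEnonneg x (mem_Ioi.mpr hx)
    have hhd : DifferentiableOn ℝ h (Ioi 0) :=
      fun x hx => (hEf x hx).differentiableAt.differentiableWithinAt
    have hhcon : ContinuousOn h (Ioi 0) :=
      fun x hx => (hEf x hx).differentiableAt.continuousAt.continuousWithinAt
    have hhderiv : ∀ x ∈ Ioi (0:ℝ), deriv h x = E x := fun x hx => (hEf x hx).deriv
    refine AntitoneOn.concaveOn_of_deriv (convex_Ioi 0) hhcon (by rwa [interior_Ioi]) ?_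
    intro x hx y hy hxy
    rw [interior_Ioi] at hx hy
    rw [hhderiv x hx, hhderiv y hy]
    exact hEanti hx hy hxy
end
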